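/- arXiv:1903.01689 — 9 statements merged into one kernel-verified Lean document; each statement's English description precedes it below -/
import Mathlib

section
/- Suppose the source risk is zero, E_S(φ,h) = 0, and the latent distributions match exactly, p_S^φ = p_T^φ. Then the target risk satisfies the lower bound E_T(φ,h) ≥ |ρ_S − ρ_T|. -/
open MeasureTheory

/-- If the source risk is zero and the latent (pushforward)
distributions match exactly, then the target risk is at least `|ρ_S - ρ_T|`,
where `ρ_U = ∫ f ∂p_U` is the positive-label proportion in domain `U`. -/
theorem target_risk_lower_bound_of_exact_matching
    {X Z : Type*} [MeasurableSpace X] [MeasurableSpace Z]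
    (pS pT : Measure X) [IsProbabilityMeasure pS] [IsProbabilityMeasure pT]
    (φ : X → Z) (hφ : Measurable φ)
    (f : X → ℝ) (hf : Measurable f) (hf01 : ∀ x, f x = 0 ∨ f x = 1)
    (h : Z → ℝ) (hh : Measurable h) (hh01 : ∀ z, h z = 0 ∨ h z = 1)
    (hES : ∫ x, |h (φ x) - f x| ∂pS = 0)
    (halign : pS.map φ = pT.map φ) :
    |(∫ x, f x ∂pS) - ∫ x, f x ∂pT| ≤ ∫ x, |h (φ x) - f x| ∂pT := by
  have hfb : ∀ x, |f x| ≤ 1 := by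
    intro x; rcases hf01 x with h1 | h1 <;> simp [h1]
  have hhb : ∀ x, |h (φ x)| ≤ 1 := by
    intro x; rcases hh01 (φ x) with h1 | h1 <;> simp [h1]
  have intfS : Integrable f pS :=
    (integrable_const (1 : ℝ)).mono' hf.aestronglyMeasurable (ae_of_all _ hfb)
  have intfT : Integrable f pT :=
    (integrable_const (1 : ℝ)).mono' hf.aestronglyMeasurable (ae_of_all _ hfb)
  have inthS : Integrable (fun x => h (φ x)) pS :=
    (integrable_const (1 : ℝ)).mono' (hh.comp hφ).aestronglyMeasurable (ae_of_all _ hhb)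
  have inthT : Integrable (fun x => h (φ x)) pT :=
    (integrable_const (1 : ℝ)).mono' (hh.comp hφ).aestronglyMeasurable (ae_of_all _ hhb)
  -- h∘φ = f a.e. on pS
  have hzero : (fun x => |h (φ x) - f x|) =ᵐ[pS] 0 := by
    have := (integral_eq_zero_iff_of_nonneg (fun x => abs_nonneg _)
      ((inthS.sub intfS).abs)).mp hES
    exact this
  have heqS : ∫ x, f x ∂pS = ∫ x, h (φ x) ∂pS := by
    have : (fun x => f x) =ᵐ[pS] (fun x => h (φ x)) := by
      filter_upwards [hzero] with x hx
      have : |h (φ x) - f x| = 0 := hx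
      have := abs_eq_zero.mp this
      linarith
    exact integral_congr_ae this
  have heqST : ∫ x, h (φ x) ∂pS = ∫ x, h (φ x) ∂pT := by
    rw [← integral_map hφ.aemeasurable hh.aestronglyMeasurable, halign,
      integral_map hφ.aemeasurable hh.aestronglyMeasurable]
  rw [heqS, heqST]
  calc |(∫ x, h (φ x) ∂pT) - ∫ x, f x ∂pT| = |∫ x, (h (φ x) - f x) ∂pT| := by
        rw [integral_sub inthT intfT]
    _ ≤ ∫ x, |h (φ x) - f x| ∂pT := by
        simpa [Real.norm_eq_abs] using norm_integral_le_integral_norm (f := fun x => h (φ x) - f x) (μ := pT)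
end

section
/- For every ρ_S, ρ_T ∈ (0,1) there exist probability measures p_S, p_T on ℝ, a labeling function f : ℝ → {0,1} with ∫ f dp_S = ρ_S and ∫ f dp_T = ρ_T, a continuous mapping φ : ℝ → ℝ, and a classifier h : ℝ → {0,1} such that E_S(φ,h) = 0, E_T(φ,h) = 0, and the pushforward densities satisfy sup_z p_T^φ(z)/p_S^φ(z) ≤ max{ρ_T/ρ_S, (1−ρ_T)/(1−ρ_S)}. (Concretely one may take p_S uniform on [0,1], p_T uniform on [2,3], f(x) = 1 iff x ∈ [0,ρ_S] ∪ [2, 2+ρ_T], φ the piecewise-linear map with φ(x) = x on [0,1], φ(x) = (x−2)ρ_S/ρ_T on [2, 2+ρ_T], φ(x) = 1 − (3−x)(1−ρ_S)/(1−ρ_T) on [2+ρ_T, 3], and h(z) = 1 iff z ≤ ρ_S.) -/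
open MeasureTheory

noncomputable def μρ (ρ : ℝ) : Measure ℝ :=
  (ENNReal.ofReal ρ) • Measure.dirac 1 + (ENNReal.ofReal (1 - ρ)) • Measure.dirac 0

lemma μρ_prob {ρ : ℝ} (h : ρ ∈ Set.Ioo (0:ℝ) 1) : IsProbabilityMeasure (μρ ρ) := by
  constructor
  simp [μρ, Measure.add_apply, Measure.smul_apply, smul_eq_mul]
  rw [← ENNReal.ofReal_add h.1.le (by linarith [h.2])]
  simp

noncomputable def ff : ℝ → ℝ := fun x => if x = 1 then 1 else 0

lemma ff_meas : Measurable ff := by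
  unfold ff
  exact Measurable.ite (measurableSet_eq) measurable_const measurable_const

lemma ff_int {ρ : ℝ} (h : ρ ∈ Set.Ioo (0:ℝ) 1) : ∫ x, ff x ∂(μρ ρ) = ρ := by
  have hint : ∀ (a : ℝ) (c : ENNReal), c ≠ ⊤ → Integrable ff (c • Measure.dirac a) := by
    intro a c hc
    refine Integrable.smul_measure ?_ hc
    refine Integrable.mono' (integrable_const 1) ff_meas.aestronglyMeasurable ?_
    filter_upwards with x
    unfold ff; split <;> simp
  rw [μρ, integral_add_measure (hint _ _ ENNReal.ofReal_ne_top) (hint _ _ ENNReal.ofReal_ne_top),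
    integral_smul_measure, integral_smul_measure, integral_dirac, integral_dirac]
  unfold ff
  simp
  exact h.1.le

/-- **Proposition 2 of the paper.** For every `ρS, ρT ∈ (0,1)` there exist
probability measures `pS, pT` on `ℝ`, a `{0,1}`-valued labeling function `f` with
`∫ f ∂pS = ρS` and `∫ f ∂pT = ρT`, a continuous representation `φ : ℝ → ℝ` and a
`{0,1}`-valued classifier `h` such that both the source and the target risks vanish while
the pushforward of `pT` under `φ` has density at most `max (ρT/ρS) ((1-ρT)/(1-ρS))`
with respect to the pushforward of `pS`. -/
theorem exists_perfect_pair_with_bounded_density_ratio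
    (ρS ρT : ℝ) (hρS : ρS ∈ Set.Ioo (0 : ℝ) 1) (hρT : ρT ∈ Set.Ioo (0 : ℝ) 1) :
    ∃ (pS pT : Measure ℝ) (f φ h : ℝ → ℝ),
      IsProbabilityMeasure pS ∧ IsProbabilityMeasure pT ∧
      Measurable f ∧ (∀ x, f x = 0 ∨ f x = 1) ∧
      Continuous φ ∧
      Measurable h ∧ (∀ z, h z = 0 ∨ h z = 1) ∧
      (∫ x, f x ∂pS) = ρS ∧ (∫ x, f x ∂pT) = ρT ∧
      (∫ x, |h (φ x) - f x| ∂pS) = 0 ∧ (∫ x, |h (φ x) - f x| ∂pT) = 0 ∧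
      pT.map φ ≤ ENNReal.ofReal (max (ρT / ρS) ((1 - ρT) / (1 - ρS))) • pS.map φ := by
  set c := max (ρT / ρS) ((1 - ρT) / (1 - ρS)) with hc
  refine ⟨μρ ρS, μρ ρT, ff, id, ff, μρ_prob hρS, μρ_prob hρT, ff_meas, ?_,
    continuous_id, ff_meas, ?_, ff_int hρS, ff_int hρT, by simp, by simp, ?_⟩
  · intro x; unfold ff; split <;> simp
  · intro z; unfold ff; split <;> simp
  · rw [Measure.map_id, Measure.map_id]
    have h1 : ENNReal.ofReal ρT ≤ ENNReal.ofReal c * ENNReal.ofReal ρS := by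
      rw [← ENNReal.ofReal_mul (le_max_iff.mpr (Or.inl (div_nonneg hρT.1.le hρS.1.le)))]
      apply ENNReal.ofReal_le_ofReal
      calc ρT = (ρT / ρS) * ρS := by field_simp [ne_of_gt hρS.1]
        _ ≤ c * ρS := by apply mul_le_mul_of_nonneg_right (le_max_left _ _) hρS.1.le
    have h2 : ENNReal.ofReal (1 - ρT) ≤ ENNReal.ofReal c * ENNReal.ofReal (1 - ρS) := by
      rw [← ENNReal.ofReal_mul (le_max_iff.mpr (Or.inl (div_nonneg hρT.1.le hρS.1.le)))]
      apply ENNReal.ofReal_le_ofReal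
      calc 1 - ρT = ((1 - ρT) / (1 - ρS)) * (1 - ρS) := by
            field_simp [show (1:ℝ) - ρS ≠ 0 by linarith [hρS.2]]
        _ ≤ c * (1 - ρS) := by
            apply mul_le_mul_of_nonneg_right (le_max_right _ _) (by linarith [hρS.2])
    rw [Measure.le_iff]
    intro s hs
    simp only [μρ, Measure.add_apply, Measure.smul_apply, smul_eq_mul,
      Measure.dirac_apply' _ hs]
    rw [mul_add, ← mul_assoc, ← mul_assoc]
    exact add_le_add (mul_le_mul_left h1 _) (mul_le_mul_left h2 _)
end

section
/- (Main bound.) Let φ : X → Z be L-Lipschitz and h : Z → {0,1} a classifier, and suppose: (i) there exist β ≥ 0 and a measurable set B ⊆ Z such that p_T^φ is absolutely continuous with respect to p_S^φ on B with density ratio dp_T^φ/dp_S^φ(z) ≤ 1+β for all z ∈ B, and p_T^φ(B) ≥ 1−δ_1; (ii) there exist disjoint sets C_0, C_1 ⊆ X with p_S(C_0 ∪ C_1) ≥ 1−δ_2, f(x) = i for all x ∈ C_i (i = 0,1), and inf{d_Z(z_0, z_1) : z_0 ∈ φ(C_0), z_1 ∈ φ(C_1)} ≥ Δ > 0; (iii)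 (connectedness from target to source) for any sets B_S, B_T ⊆ X with p_S(B_S) ≥ 1−δ_2 and p_T(B_T) ≥ 1−δ_1−(1+β)δ_2, there exists C_T ⊆ B_T with p_T(C_T) ≥ 1−δ_3 such that for every x ∈ C_T there is x' ∈ C_T ∩ B_S with f(x') = f(x) and a finite sequence x_0, x_1, …, x_m ∈ C_T with x_0 = x, x_m = x', and d_X(x_{i−1}, x_i) < Δ/L for all i = 1,…,m. Then the target risk is bounded by E_T(φ,h) ≤ (1+β) E_S(φ,h) + 3δ_1 + 2(1+β)δ_2 + δ_3. -/
open MeasureTheory Set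

/-! Let `Z0, Z1` be the closures of `φ '' C0` and `φ '' C1`; they stay `Δ`-separated, so the
latent labelling `g := Z0ᶜ.indicator 1` satisfies `g ∘ φ = f` on `C0 ∪ C1`. By the density-ratio
bound, `φ⁻¹' (B ∩ (Z0 ∪ Z1))` keeps target mass `1 - δ1 - (1 + β) δ2`, so connectedness yields
`CT`. The image under `φ` of a chain with steps `< Δ / L` has steps `< Δ` and cannot jump between
`Z0` and `Z1`, hence `g ∘ φ = f` on `CT` too. So target errors in `CT` lie over
`V := {z ∈ B ∩ (Z0 ∪ Z1) | h z ≠ g z}`, whose target mass is at most `1 + β` times its source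
mass, and source points of `C0 ∪ C1` over `V` are source errors. -/

theorem le_dist_of_mem_closure {E : Type*} [PseudoMetricSpace E] {s t : Set E} {Δ : ℝ}
    (hst : ∀ a ∈ s, ∀ b ∈ t, Δ ≤ dist a b) :
    ∀ a ∈ closure s, ∀ b ∈ closure t, Δ ≤ dist a b := by
  have hclosed : IsClosed {p : E × E | Δ ≤ dist p.1 p.2} :=
    isClosed_le continuous_const continuous_dist
  have hsub : closure (s ×ˢ t) ⊆ {p : E × E | Δ ≤ dist p.1 p.2} :=
    closure_minimal (fun p hp => hst _ hp.1 _ hp.2) hclosed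
  rw [closure_prod_eq] at hsub
  exact fun a ha b hb => hsub (mk_mem_prod ha hb)

theorem mem_of_dist_lt_of_separated {E : Type*} [PseudoMetricSpace E] {s t : Set E} {Δ : ℝ}
    (hst : ∀ a ∈ s, ∀ b ∈ t, Δ ≤ dist a b) {a b : E} (ha : a ∈ s) (hb : b ∈ s ∪ t)
    (hab : dist a b < Δ) : b ∈ s :=
  hb.resolve_right fun hbt => (hst a ha b hbt).not_gt hab

theorem chain_mem_iff_of_separated {E : Type*} [PseudoMetricSpace E] {s t : Set E} {Δ : ℝ}
    (hst : ∀ a ∈ s, ∀ b ∈ t, Δ ≤ dist a b) {z : ℕ → E} {m : ℕ}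
    (hz : ∀ i ≤ m, z i ∈ s ∪ t) (hstep : ∀ i < m, dist (z i) (z (i + 1)) < Δ) :
    z 0 ∈ s ↔ z m ∈ s := by
  induction m with
  | zero => rfl
  | succ n ih =>
    rw [ih (fun i hi => hz i (by omega)) (fun i hi => hstep i (by omega))]
    have hn := hstep n (by omega)
    exact ⟨fun h => mem_of_dist_lt_of_separated hst h (hz _ le_rfl) hn,
      fun h => mem_of_dist_lt_of_separated hst h (hz n (by omega)) (dist_comm (z n) _ ▸ hn)⟩

theorem indicator_compl_closure_image_eq {X E : Type*} [PseudoMetricSpace E] {φ : X → E}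
    {C0 C1 : Set X} {f : X → ℝ} {Δ : ℝ} (hΔ : 0 < Δ)
    (hC0 : ∀ x ∈ C0, f x = 0) (hC1 : ∀ x ∈ C1, f x = 1)
    (hsep : ∀ a ∈ closure (φ '' C0), ∀ b ∈ closure (φ '' C1), Δ ≤ dist a b) :
    ∀ x ∈ C0 ∪ C1, (closure (φ '' C0))ᶜ.indicator 1 (φ x) = f x := by
  rintro x (hx | hx)
  · have hx0 : φ x ∈ closure (φ '' C0) := subset_closure (mem_image_of_mem φ hx)
    simp [hC0 x hx, hx0]
  · have hx1 : φ x ∈ closure (φ '' C1) := subset_closure (mem_image_of_mem φ hx)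
    have hx0 : φ x ∉ closure (φ '' C0) := fun hx0 =>
      (hsep _ hx0 _ hx1).not_gt (by simpa using hΔ)
    simp [hC1 x hx, hx0]

theorem dist_lt_of_dist_lt_div {α β : Type*} [PseudoMetricSpace α] [PseudoMetricSpace β]
    {φ : α → β} {L Δ : ℝ} (hLip : ∀ x1 x2, dist (φ x1) (φ x2) ≤ L * dist x1 x2) (hΔ : 0 < Δ)
    {a b : α} (hab : dist a b < Δ / L) : dist (φ a) (φ b) < Δ := by
  rcases lt_or_ge 0 L with hL | hL
  · calc dist (φ a) (φ b) ≤ L * dist a b := hLip a b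
      _ < L * (Δ / L) := by gcongr
      _ = Δ := mul_div_cancel₀ Δ hL.ne'
  · nlinarith [hLip a b, dist_nonneg (x := a) (y := b)]

theorem indicator_compl_eq_of_chain {X E : Type*} [PseudoMetricSpace X] [PseudoMetricSpace E]
    {φ : X → E} {L Δ : ℝ} (hLip : ∀ x1 x2, dist (φ x1) (φ x2) ≤ L * dist x1 x2) (hΔ : 0 < Δ)
    {s t : Set E} (hst : ∀ a ∈ s, ∀ b ∈ t, Δ ≤ dist a b) {c : ℕ → X} {m : ℕ}
    (hc : ∀ i ≤ m, φ (c i) ∈ s ∪ t) (hstep : ∀ i < m, dist (c i) (c (i + 1)) < Δ / L) :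
    sᶜ.indicator (1 : E → ℝ) (φ (c 0)) = sᶜ.indicator 1 (φ (c m)) := by
  have hiff : φ (c 0) ∈ s ↔ φ (c m) ∈ s :=
    chain_mem_iff_of_separated hst hc fun i hi => dist_lt_of_dist_lt_div hLip hΔ (hstep i hi)
  classical
  simp only [indicator_apply, mem_compl_iff, hiff, Pi.one_apply]

section Probability

variable {α : Type*} [MeasurableSpace α]

theorem nonneg_of_ofReal_one_sub_le {μ : Measure α} [IsProbabilityMeasure μ] {S : Set α}
    {ε : ℝ} (hS : ENNReal.ofReal (1 - ε) ≤ μ S) : 0 ≤ ε := by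
  have := ENNReal.ofReal_le_one.1 (hS.trans prob_le_one)
  linarith

theorem measure_le_of_disjoint_of_ofReal_one_sub_le {μ : Measure α} [IsProbabilityMeasure μ]
    {M S : Set α} {ε : ℝ} (hM : MeasurableSet M) (hS : ENNReal.ofReal (1 - ε) ≤ μ S)
    (hMS : Disjoint M S) : μ M ≤ ENNReal.ofReal ε := by
  have hone : 1 ≤ ENNReal.ofReal ε + ENNReal.ofReal (1 - ε) := by
    simpa using ENNReal.ofReal_add_le (p := ε) (q := 1 - ε)
  calc μ M = 1 - μ Mᶜ := by rw [← prob_compl_eq_one_sub hM.compl, compl_compl]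
    _ ≤ 1 - μ S := tsub_le_tsub_left (measure_mono hMS.subset_compl_left) 1
    _ ≤ 1 - ENNReal.ofReal (1 - ε) := tsub_le_tsub_left hS 1
    _ ≤ ENNReal.ofReal ε := tsub_le_iff_right.2 hone

theorem measure_le_add_of_inter_subset {μ : Measure α} [IsProbabilityMeasure μ]
    {M N S : Set α} {ε : ℝ} (hM : MeasurableSet M) (hN : MeasurableSet N)
    (hS : ENNReal.ofReal (1 - ε) ≤ μ S) (hMS : M ∩ S ⊆ N) : μ M ≤ μ N + ENNReal.ofReal ε :=
  calc μ M ≤ μ (M ∩ N) + μ (M \ N) := measure_le_inter_add_sdiff μ M N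
    _ ≤ μ N + ENNReal.ofReal ε := by
      gcongr
      · exact inter_subset_right
      · refine measure_le_of_disjoint_of_ofReal_one_sub_le (hM.diff hN) hS ?_
        exact disjoint_left.2 fun x hx hxS => hx.2 (hMS ⟨hx.1, hxS⟩)

theorem measure_le_mul_of_restrict_le_smul {μ ν : Measure α} {B s : Set α} {c : ENNReal}
    (hνμ : ν.restrict B ≤ c • μ.restrict B) (hs : MeasurableSet s) (hsB : s ⊆ B) :
    ν s ≤ c * μ s := by
  simpa [Measure.restrict_apply hs, inter_eq_self_of_subset_left hsB] using
    Measure.le_iff.1 hνμ s hs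

theorem ofReal_le_measure_inter_of_restrict_le_smul {μS μT : Measure α} [IsProbabilityMeasure μS]
    {B Z' : Set α} {β δ1 δ2 : ℝ} (hβ : 0 ≤ β) (hB : MeasurableSet B) (hZ' : MeasurableSet Z')
    (hratio : μT.restrict B ≤ ENNReal.ofReal (1 + β) • μS.restrict B)
    (hBmass : ENNReal.ofReal (1 - δ1) ≤ μT B) (hZ'mass : ENNReal.ofReal (1 - δ2) ≤ μS Z') :
    ENNReal.ofReal (1 - δ1 - (1 + β) * δ2) ≤ μT (B ∩ Z') := by
  have hδ2 := nonneg_of_ofReal_one_sub_le hZ'mass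
  have hout : μS (B \ Z') ≤ ENNReal.ofReal δ2 := by
    simpa using measure_le_add_of_inter_subset (hB.diff hZ') MeasurableSet.empty hZ'mass
      (fun x hx => hx.1.2 hx.2)
  have hsplit : ENNReal.ofReal (1 - δ1) ≤ μT (B ∩ Z') + ENNReal.ofReal ((1 + β) * δ2) :=
    calc ENNReal.ofReal (1 - δ1) ≤ μT B := hBmass
      _ ≤ μT (B ∩ Z') + μT (B \ Z') := measure_le_inter_add_sdiff μT B Z'
      _ ≤ μT (B ∩ Z') + ENNReal.ofReal (1 + β) * μS (B \ Z') := by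
        gcongr
        exact measure_le_mul_of_restrict_le_smul hratio (hB.diff hZ') sdiff_subset
      _ ≤ μT (B ∩ Z') + ENNReal.ofReal ((1 + β) * δ2) := by
        rw [ENNReal.ofReal_mul (by linarith)]
        gcongr
  rw [ENNReal.ofReal_sub _ (by positivity)]
  exact tsub_le_iff_right.2 hsplit

theorem measureReal_le_of_transfer {μS μT : Measure α} [IsProbabilityMeasure μS]
    [IsProbabilityMeasure μT] {D W S T : Set α} {c ε ε' : ℝ} (hD : MeasurableSet D)
    (hW : MeasurableSet W) (hc : 0 ≤ c)
    (hT : ENNReal.ofReal (1 - ε') ≤ μT T) (hTD : D ∩ T ⊆ W)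
    (hS : ENNReal.ofReal (1 - ε) ≤ μS S) (hSW : W ∩ S ⊆ D)
    (hWT : μT W ≤ ENNReal.ofReal c * μS W) :
    μT.real D ≤ c * (μS.real D + ε) + ε' := by
  have hε := nonneg_of_ofReal_one_sub_le hS
  have hε' := nonneg_of_ofReal_one_sub_le hT
  refine ENNReal.toReal_le_of_le_ofReal (by positivity) ?_
  calc μT D ≤ μT W + ENNReal.ofReal ε' := measure_le_add_of_inter_subset hD hW hT hTD
    _ ≤ ENNReal.ofReal c * (μS D + ENNReal.ofReal ε) + ENNReal.ofReal ε' := by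
      gcongr
      exact hWT.trans (by gcongr; exact measure_le_add_of_inter_subset hW hD hS hSW)
    _ = ENNReal.ofReal (c * (μS.real D + ε) + ε') := by
      rw [ENNReal.ofReal_add (by positivity) hε', ENNReal.ofReal_mul hc,
        ENNReal.ofReal_add measureReal_nonneg hε, ofReal_measureReal]

theorem integral_abs_sub_eq_measureReal (μ : Measure α) {u v : α → ℝ} (hu : Measurable u)
    (hv : Measurable v) (hu01 : ∀ x, u x = 0 ∨ u x = 1) (hv01 : ∀ x, v x = 0 ∨ v x = 1) :
    ∫ x, |u x - v x| ∂μ = μ.real {x | u x ≠ v x} := by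
  have hD : MeasurableSet {x | u x ≠ v x} := (measurableSet_eq_fun hu hv).compl
  rw [← integral_indicator_one hD]
  congr 1
  funext x
  by_cases hx : u x = v x
  · simp [hx]
  · rw [indicator_of_mem hx]
    rcases hu01 x with h | h <;> rcases hv01 x with h' | h' <;> simp_all

end Probability

theorem target_risk_main_bound_general
    {X Z : Type*} [MetricSpace X] [MetricSpace Z]
    [MeasurableSpace X] [MeasurableSpace Z] [BorelSpace Z]
    (pS pT : Measure X) [IsProbabilityMeasure pS] [IsProbabilityMeasure pT]
    (f : X → ℝ) (hf : Measurable f) (hf01 : ∀ x, f x = 0 ∨ f x = 1)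
    (φ : X → Z) (hφ : Measurable φ)
    (h : Z → ℝ) (hh : Measurable h) (hh01 : ∀ z, h z = 0 ∨ h z = 1)
    (L β Δ δ1 δ2 δ3 : ℝ) (hβ : 0 ≤ β) (hΔ : 0 < Δ)
    -- (1) Lipschitzness of the representation mapping
    (hLip : ∀ x1 x2, dist (φ x1) (φ x2) ≤ L * dist x1 x2)
    -- (2) imperfect asymmetrically-relaxed distribution alignment
    (B : Set Z) (hB : MeasurableSet B)
    (hratio : (pT.map φ).restrict B ≤ ENNReal.ofReal (1 + β) • (pS.map φ).restrict B)
    (hBmass : ENNReal.ofReal (1 - δ1) ≤ pT.map φ B)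
    -- (3) separation of the source domain in the latent space
    (C0 C1 : Set X)
    (hCmass : ENNReal.ofReal (1 - δ2) ≤ pS (C0 ∪ C1))
    (hC0 : ∀ x ∈ C0, f x = 0) (hC1 : ∀ x ∈ C1, f x = 1)
    (hsep : ∀ x0 ∈ C0, ∀ x1 ∈ C1, Δ ≤ dist (φ x0) (φ x1))
    -- connectedness from target domain to source domain
    (hconn : ∀ BS BT : Set X,
      ENNReal.ofReal (1 - δ2) ≤ pS BS →
      ENNReal.ofReal (1 - δ1 - (1 + β) * δ2) ≤ pT BT →
      ∃ CT ⊆ BT, ENNReal.ofReal (1 - δ3) ≤ pT CT ∧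
        ∀ x ∈ CT, ∃ x' ∈ CT ∩ BS, f x' = f x ∧
          ∃ (m : ℕ) (c : ℕ → X), c 0 = x ∧ c m = x' ∧ (∀ i ≤ m, c i ∈ CT) ∧
            ∀ i < m, dist (c i) (c (i + 1)) < Δ / L) :
    ∫ x, |h (φ x) - f x| ∂pT ≤
      (1 + β) * ∫ x, |h (φ x) - f x| ∂pS + 3 * δ1 + 2 * (1 + β) * δ2 + δ3 := by
  set Z0 := closure (φ '' C0)
  set Z1 := closure (φ '' C1)
  have hZ0 : MeasurableSet Z0 := isClosed_closure.measurableSet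
  have hZ1 : MeasurableSet Z1 := isClosed_closure.measurableSet
  have hZsep : ∀ a ∈ Z0, ∀ b ∈ Z1, Δ ≤ dist a b := le_dist_of_mem_closure <| by
    rintro _ ⟨x0, hx0, rfl⟩ _ ⟨x1, hx1, rfl⟩
    exact hsep x0 hx0 x1 hx1
  have hC_sub : C0 ∪ C1 ⊆ φ ⁻¹' (Z0 ∪ Z1) :=
    union_subset_union (image_subset_iff.1 subset_closure) (image_subset_iff.1 subset_closure)
  set g : Z → ℝ := Z0ᶜ.indicator 1
  have hg : Measurable g := measurable_const.indicator hZ0.compl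
  have hg_src : ∀ x ∈ C0 ∪ C1, g (φ x) = f x :=
    indicator_compl_closure_image_eq hΔ hC0 hC1 hZsep
  have hBT : ENNReal.ofReal (1 - δ1 - (1 + β) * δ2) ≤ pT (φ ⁻¹' (B ∩ (Z0 ∪ Z1))) := by
    have := Measure.isProbabilityMeasure_map (μ := pS) hφ.aemeasurable
    rw [← Measure.map_apply hφ (hB.inter (hZ0.union hZ1))]
    refine ofReal_le_measure_inter_of_restrict_le_smul hβ hB (hZ0.union hZ1) hratio hBmass ?_
    rw [Measure.map_apply hφ (hZ0.union hZ1)]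
    exact hCmass.trans (measure_mono hC_sub)
  obtain ⟨CT, hCT_sub, hCT_mass, hCT_chain⟩ := hconn _ _ hCmass hBT
  have hg_tgt : ∀ x ∈ CT, g (φ x) = f x := by
    intro x hx
    obtain ⟨x', ⟨-, hx'S⟩, hfx', m, c, rfl, rfl, hc, hstep⟩ := hCT_chain x hx
    rw [← hfx', ← hg_src _ hx'S]
    exact indicator_compl_eq_of_chain hLip hΔ hZsep (fun i hi => (hCT_sub (hc i hi)).2) hstep
  set V := B ∩ (Z0 ∪ Z1) ∩ {z | h z ≠ g z}
  have hV : MeasurableSet V := (hB.inter (hZ0.union hZ1)).inter (measurableSet_eq_fun hh hg).compl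
  have hD : MeasurableSet {x | h (φ x) ≠ f x} := (measurableSet_eq_fun (hh.comp hφ) hf).compl
  have hδ1 : 0 ≤ δ1 := nonneg_of_ofReal_one_sub_le (hBmass.trans_eq (Measure.map_apply hφ hB))
  have hδ2 : 0 ≤ δ2 := nonneg_of_ofReal_one_sub_le hCmass
  have htransfer := measureReal_le_of_transfer (c := 1 + β) hD (hφ hV) (by linarith) hCT_mass
    (fun x hx => ⟨hCT_sub hx.2, fun he => hx.1 (he.trans (hg_tgt x hx.2))⟩) hCmass
    (fun x hx he => hx.1.2 (he.trans (hg_src x hx.2).symm))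
    (by simpa [Measure.map_apply hφ hV] using
      measure_le_mul_of_restrict_le_smul hratio hV (inter_subset_left.trans inter_subset_left))
  have hrisk (μ : Measure X) := integral_abs_sub_eq_measureReal μ (u := fun x => h (φ x))
    (hh.comp hφ) hf (fun x => hh01 (φ x)) hf01
  rw [hrisk pT, hrisk pS]
  nlinarith [mul_nonneg hβ hδ2]

/-- **Theorem 1 of the paper, main bound.** Under
(1) `L`-Lipschitzness of `φ`, (2) imperfect asymmetrically-relaxed distribution alignment
(density ratio of `pT.map φ` w.r.t. `pS.map φ` bounded by `1+β` on a set `B` of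
target-pushforward mass `≥ 1−δ1`), (3) separation of the source domain in latent space
(disjoint label-pure sets `C0, C1` of source mass `≥ 1−δ2` whose images are `Δ`-separated),
and the connectedness-from-target-to-source assumption, the target risk is bounded by
`(1+β)·E_S + 3δ1 + 2(1+β)δ2 + δ3`. -/
theorem target_risk_main_bound
    {X Z : Type*} [MetricSpace X] [MetricSpace Z]
    [MeasurableSpace X] [BorelSpace X] [MeasurableSpace Z] [BorelSpace Z]
    (pS pT : Measure X) [IsProbabilityMeasure pS] [IsProbabilityMeasure pT]
    (f : X → ℝ) (hf : Measurable f) (hf01 : ∀ x, f x = 0 ∨ f x = 1)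
    (φ : X → Z) (hφ : Measurable φ)
    (h : Z → ℝ) (hh : Measurable h) (hh01 : ∀ z, h z = 0 ∨ h z = 1)
    (L β Δ δ1 δ2 δ3 : ℝ) (hβ : 0 ≤ β) (hΔ : 0 < Δ)
    -- (1) Lipschitzness of the representation mapping
    (hLip : ∀ x1 x2, dist (φ x1) (φ x2) ≤ L * dist x1 x2)
    -- (2) imperfect asymmetrically-relaxed distribution alignment
    (B : Set Z) (hB : MeasurableSet B)
    (hratio : (pT.map φ).restrict B ≤ ENNReal.ofReal (1 + β) • (pS.map φ).restrict B)
    (hBmass : ENNReal.ofReal (1 - δ1) ≤ pT.map φ B)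
    -- (3) separation of the source domain in the latent space
    (C0 C1 : Set X) (hdisj : Disjoint C0 C1)
    (hCmass : ENNReal.ofReal (1 - δ2) ≤ pS (C0 ∪ C1))
    (hC0 : ∀ x ∈ C0, f x = 0) (hC1 : ∀ x ∈ C1, f x = 1)
    (hsep : ∀ x0 ∈ C0, ∀ x1 ∈ C1, Δ ≤ dist (φ x0) (φ x1))
    -- connectedness from target domain to source domain
    (hconn : ∀ BS BT : Set X,
      ENNReal.ofReal (1 - δ2) ≤ pS BS →
      ENNReal.ofReal (1 - δ1 - (1 + β) * δ2) ≤ pT BT →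
      ∃ CT ⊆ BT, ENNReal.ofReal (1 - δ3) ≤ pT CT ∧
        ∀ x ∈ CT, ∃ x' ∈ CT ∩ BS, f x' = f x ∧
          ∃ (m : ℕ) (c : ℕ → X), c 0 = x ∧ c m = x' ∧ (∀ i ≤ m, c i ∈ CT) ∧
            ∀ i < m, dist (c i) (c (i + 1)) < Δ / L) :
    ∫ x, |h (φ x) - f x| ∂pT ≤
      (1 + β) * ∫ x, |h (φ x) - f x| ∂pS + 3 * δ1 + 2 * (1 + β) * δ2 + δ3 :=
  target_risk_main_bound_general pS pT f hf hf01 φ hφ h hh hh01 L β Δ δ1 δ2 δ3 hβ hΔ hLip B hB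
    hratio hBmass C0 C1 hCmass hC0 hC1 hsep hconn
end

section
/- (Alignment term bound under imperfect relaxed alignment.) Suppose there exist β ≥ 0 and a measurable set B ⊆ Z such that p_T^φ is absolutely continuous with respect to p_S^φ on B with dp_T^φ/dp_S^φ(z) ≤ 1+β for all z ∈ B, and p_T^φ(B) ≥ 1−δ_1. Then for any classifier h : Z → {0,1}, ∫_Z r_S(z; φ,h) (dp_T^φ − dp_S^φ)(z) ≤ β E_S(φ,h) + δ_1. -/
open MeasureTheory
open scoped ENNReal

/-!
On `B` the density ratio bounds the target risk integral by `(1 + β)` times the source one,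
and off `B` the integrand `|h - f_S^φ| ≤ 1` costs at most `p_T^φ(Bᶜ) ≤ δ₁`. The source integral
of `|h - f_S^φ|` is the source risk: for `h ∈ {0, 1}` the map `t ↦ |h - t|` is affine on
`[0, 1]`, with a `φ`-measurable slope, so the conditional expectation can be pulled through it.
-/

theorem integral_mul_eq_of_condExp_ae_eq {X : Type*} {m m₀ : MeasurableSpace X}
    {μ : Measure[m₀] X} [IsFiniteMeasure μ] (hm : m ≤ m₀) {k f F : X → ℝ}
    (hk : StronglyMeasurable[m] k) {C : ℝ} (hkC : ∀ᵐ x ∂μ, ‖k x‖ ≤ C)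
    (hf : Integrable f μ) (hF : μ[f | m] =ᵐ[μ] F) :
    ∫ x, k x * f x ∂μ = ∫ x, k x * F x ∂μ :=
  calc ∫ x, k x * f x ∂μ = ∫ x, (μ[k * f | m]) x ∂μ := (integral_condExp hm).symm
    _ = ∫ x, k x * F x ∂μ := integral_congr_ae <|
      (condExp_stronglyMeasurable_mul_of_bound hm hk hf C hkC).trans
        (hF.mono fun x hx => by simp [hx])

theorem abs_sub_eq_add_mul_of_mem_Icc {a t : ℝ} (ha : a = 0 ∨ a = 1) (ht : t ∈ Set.Icc 0 1) :
    |a - t| = a + (1 - 2 * a) * t := by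
  obtain ⟨ht0, ht1⟩ := ht
  rcases ha with rfl | rfl
  · rw [abs_of_nonpos (by linarith)]; ring
  · rw [abs_of_nonneg (by linarith)]; ring

theorem mem_Icc_of_eq_zero_or_eq_one {a : ℝ} (ha : a = 0 ∨ a = 1) : a ∈ Set.Icc (0 : ℝ) 1 := by
  rcases ha with rfl | rfl <;> norm_num

theorem integral_abs_sub_comp_eq_of_condExp_ae_eq {X Z : Type*} [MeasurableSpace X]
    [MeasurableSpace Z] {μ : Measure X} [IsFiniteMeasure μ] {φ : X → Z} (hφ : Measurable φ)
    {f : X → ℝ} (hf : Measurable f) (hf01 : ∀ x, f x ∈ Set.Icc (0 : ℝ) 1)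
    {h : Z → ℝ} (hh : Measurable h) (hh01 : ∀ z, h z = 0 ∨ h z = 1)
    {g : Z → ℝ} (hg : Measurable g) (hg01 : ∀ z, g z ∈ Set.Icc (0 : ℝ) 1)
    (hcond : μ[f | MeasurableSpace.comap φ inferInstance] =ᵐ[μ] fun x => g (φ x)) :
    ∫ x, |h (φ x) - g (φ x)| ∂μ = ∫ x, |h (φ x) - f x| ∂μ := by
  have hIcc_bound {u : X → ℝ} (hu : ∀ x, u x ∈ Set.Icc (0 : ℝ) 1) : ∀ᵐ x ∂μ, ‖u x‖ ≤ 1 :=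
    .of_forall fun x => by rw [Real.norm_eq_abs, abs_le]; exact ⟨by linarith [(hu x).1], (hu x).2⟩
  have hslope_bound : ∀ᵐ x ∂μ, ‖1 - 2 * h (φ x)‖ ≤ 1 :=
    .of_forall fun x => by rcases hh01 (φ x) with e | e <;> norm_num [e]
  have hhφ_int : Integrable (fun x => h (φ x)) μ :=
    .of_bound (hh.comp hφ).aestronglyMeasurable 1
      (hIcc_bound fun x => mem_Icc_of_eq_zero_or_eq_one (hh01 (φ x)))
  have hslope_int {u : X → ℝ} (hu_meas : Measurable u) (hu : ∀ x, u x ∈ Set.Icc (0 : ℝ) 1) :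
      Integrable (fun x => (1 - 2 * h (φ x)) * u x) μ :=
    (Integrable.of_bound hu_meas.aestronglyMeasurable 1 (hIcc_bound hu)).bdd_mul
      ((measurable_const.sub (measurable_const.mul hh)).comp hφ).aestronglyMeasurable
      hslope_bound
  have hslope_meas : StronglyMeasurable[MeasurableSpace.comap φ inferInstance]
      fun x => 1 - 2 * h (φ x) :=
    ((measurable_const.sub (measurable_const.mul hh)).comp (comap_measurable φ)).stronglyMeasurable
  have hpull := integral_mul_eq_of_condExp_ae_eq hφ.comap_le hslope_meas hslope_bound
    (.of_bound hf.aestronglyMeasurable 1 (hIcc_bound hf01)) hcond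
  simp_rw [abs_sub_eq_add_mul_of_mem_Icc (hh01 _) (hg01 _),
    abs_sub_eq_add_mul_of_mem_Icc (hh01 _) (hf01 _)]
  rw [integral_add hhφ_int (hslope_int (u := fun x => g (φ x)) (hg.comp hφ) fun x => hg01 (φ x)),
    integral_add hhφ_int (hslope_int hf hf01), hpull]

theorem integral_le_mul_integral_of_le_smul {Z : Type*} [MeasurableSpace Z] {μ ν : Measure Z}
    {c : ℝ≥0∞} (hc : c ≠ ∞) (hνμ : ν ≤ c • μ) {r : Z → ℝ} (hr0 : 0 ≤ r) (hr : Integrable r μ) :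
    ∫ z, r z ∂ν ≤ c.toReal * ∫ z, r z ∂μ := by
  simpa [integral_smul_measure] using
    integral_mono_measure hνμ (.of_forall hr0) (hr.smul_measure hc)

theorem setIntegral_le_measureReal_of_le_one {Z : Type*} [MeasurableSpace Z] {ν : Measure Z}
    [IsFiniteMeasure ν] {r : Z → ℝ} (hr : Integrable r ν) (hr1 : ∀ z, r z ≤ 1) (s : Set Z) :
    ∫ z in s, r z ∂ν ≤ ν.real s := by
  simpa using setIntegral_mono hr.integrableOn (integrable_const 1).integrableOn hr1 (s := s)

theorem integral_sub_integral_le_of_restrict_le_smul {Z : Type*} [MeasurableSpace Z]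
    {μ ν : Measure Z} [IsFiniteMeasure μ] [IsProbabilityMeasure ν] {r : Z → ℝ}
    (hr : Measurable r) (hr0 : 0 ≤ r) (hr1 : ∀ z, r z ≤ 1) {β δ : ℝ} (hβ : 0 ≤ β)
    {B : Set Z} (hB : MeasurableSet B)
    (hratio : ν.restrict B ≤ ENNReal.ofReal (1 + β) • μ.restrict B)
    (hmass : ENNReal.ofReal (1 - δ) ≤ ν B) :
    ∫ z, r z ∂ν - ∫ z, r z ∂μ ≤ β * ∫ z, r z ∂μ + δ := by
  have hr_int (ρ : Measure Z) [IsFiniteMeasure ρ] : Integrable r ρ :=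
    .of_bound hr.aestronglyMeasurable 1
      (.of_forall fun z => by rw [Real.norm_eq_abs, abs_of_nonneg (hr0 z)]; exact hr1 z)
  have hon_B : ∫ z in B, r z ∂ν ≤ (1 + β) * ∫ z in B, r z ∂μ := by
    simpa [ENNReal.toReal_ofReal (by linarith : 0 ≤ 1 + β)] using
      integral_le_mul_integral_of_le_smul ENNReal.ofReal_ne_top hratio hr0
        (hr_int μ).restrict
  have hoff_B : ∫ z in Bᶜ, r z ∂ν ≤ δ := by
    have hνB : 1 - δ ≤ ν.real B :=
      (ENNReal.ofReal_le_iff_le_toReal (measure_ne_top ν B)).mp hmass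
    have := setIntegral_le_measureReal_of_le_one (hr_int ν) hr1 Bᶜ
    rw [probReal_compl_eq_one_sub hB] at this
    linarith
  have hB_le : ∫ z in B, r z ∂μ ≤ ∫ z, r z ∂μ := setIntegral_le_integral (hr_int μ) (.of_forall hr0)
  have := mul_le_mul_of_nonneg_left hB_le (by linarith : (0 : ℝ) ≤ 1 + β)
  rw [← integral_add_compl hB (hr_int ν)]
  linarith

/-- **alignment term bound under imperfect relaxed alignment.** If there are
`β ≥ 0` and a measurable `B ⊆ Z` on which the density ratio of `pT.map φ` w.r.t. `pS.map φ`
is at most `1+β`, with `pT.map φ B ≥ 1 − δ1`, then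
`∫ r_S d(pT.map φ) − ∫ r_S d(pS.map φ) ≤ β·E_S(φ,h) + δ1`, where `r_S(z) = |h z − g z|`
with `g = f_S^φ` a version of the conditional expectation of `f` given `φ`. -/
theorem alignment_term_le_of_imperfect_relaxed_alignment
    {X Z : Type*} [MeasurableSpace X] [MeasurableSpace Z]
    (pS pT : Measure X) [IsProbabilityMeasure pS] [IsProbabilityMeasure pT]
    (φ : X → Z) (hφ : Measurable φ)
    (f : X → ℝ) (hf : Measurable f) (hf01 : ∀ x, f x = 0 ∨ f x = 1)
    (h : Z → ℝ) (hh : Measurable h) (hh01 : ∀ z, h z = 0 ∨ h z = 1)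
    (g : Z → ℝ) (hg : Measurable g) (hg01 : ∀ z, g z ∈ Set.Icc (0 : ℝ) 1)
    (hcond : pS[f | MeasurableSpace.comap φ inferInstance] =ᵐ[pS] fun x => g (φ x))
    (β δ1 : ℝ) (hβ : 0 ≤ β)
    (B : Set Z) (hB : MeasurableSet B)
    (hratio : (pT.map φ).restrict B ≤ ENNReal.ofReal (1 + β) • (pS.map φ).restrict B)
    (hBmass : ENNReal.ofReal (1 - δ1) ≤ pT.map φ B) :
    (∫ z, |h z - g z| ∂(pT.map φ)) - ∫ z, |h z - g z| ∂(pS.map φ) ≤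
      β * (∫ x, |h (φ x) - f x| ∂pS) + δ1 := by
  have : IsProbabilityMeasure (pT.map φ) := Measure.isProbabilityMeasure_map hφ.aemeasurable
  have hr_meas : Measurable fun z => |h z - g z| := (hh.sub hg).abs
  have hr1 (z : Z) : |h z - g z| ≤ 1 :=
    have ⟨hz0, hz1⟩ := mem_Icc_of_eq_zero_or_eq_one (hh01 z)
    abs_sub_le_of_nonneg_of_le hz0 hz1 (hg01 z).1 (hg01 z).2
  have hrisk : ∫ z, |h z - g z| ∂(pS.map φ) = ∫ x, |h (φ x) - f x| ∂pS := by
    rw [integral_map hφ.aemeasurable hr_meas.aestronglyMeasurable]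
    exact integral_abs_sub_comp_eq_of_condExp_ae_eq hφ hf
      (fun x => mem_Icc_of_eq_zero_or_eq_one (hf01 x)) hh hh01 hg hg01 hcond
  rw [← hrisk]
  exact integral_sub_integral_le_of_restrict_le_smul hr_meas (fun z => abs_nonneg _) hr1 hβ hB
    hratio hBmass
end

section
/- (Label-consistency term bound.) Let φ : X → Z be L-Lipschitz and h : Z → {0,1}, and suppose: (i) there exist β ≥ 0 and a measurable set B ⊆ Z such that p_T^φ is absolutely continuous with respect to p_S^φ on B with dp_T^φ/dp_S^φ(z) ≤ 1+β for all z ∈ B, and p_T^φ(B) ≥ 1−δ_1; (ii) there exist disjoint sets C_0, C_1 ⊆ X with p_S(C_0 ∪ C_1) ≥ 1−δ_2, f(x) = i for all x ∈ C_i (i = 0,1), and inf{d_Z(z_0, z_1) : z_0 ∈ φ(C_0), z_1 ∈ φ(C_1)} ≥ Δ > 0; (iii) there exists C_T ⊆ X with φ(C_T) ⊆ φ(C_0 ∪ C_1), p_T(C_T) ≥ 1−δ_3, and such that for every x ∈ C_T there is x' ∈ C_T ∩ (C_0 ∪ C_1) with f(x') = f(x) and a finite sequence x_0, …, x_m ∈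 C_T with x_0 = x, x_m = x', and d_X(x_{i−1}, x_i) < Δ/L for all i. Then ∫_Z (r_T(z; φ,h) − r_S(z; φ,h)) dp_T^φ(z) ≤ 2δ_1 + 2(1+β)δ_2 + δ_3. -/
/-!
The difference of residuals is at most `|f_T^φ - f_S^φ|`, and both conditional expectations are
compared with the latent labelling `ψ = 1_D`, where `D` is the `Δ`-thickening of `φ(C1)`.
Because `|f - ψ ∘ φ|` is affine in `f` when `ψ` is `{0,1}`-valued, `∫ |f_U^φ - ψ| dp_U^φ` is the
`p_U`-mass of the points whose label disagrees with `ψ ∘ φ`. Separation gives `ψ ∘ φ = f` on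
`C0 ∪ C1`, and a chain with steps `< Δ/L` moves by `< Δ` in `Z`, so it cannot jump between the
`Δ`-separated images of the clusters; hence `ψ ∘ φ = f` on `CT` as well. These masses are thus at
most `δ2` and `δ3`; on `B` the density ratio turns the source one into `(1+β)δ2`, and off `B` the
integrand is at most `1`, which costs `δ1`.
-/

open MeasureTheory Set Metric

lemma indicator_one_mem_Icc {α : Type*} (s : Set α) (a : α) :
    s.indicator (1 : α → ℝ) a ∈ Icc (0 : ℝ) 1 := by
  by_cases ha : a ∈ s <;> simp [ha]

lemma abs_sub_mem_Icc_of_mem_Icc {a b : ℝ} (ha : a ∈ Icc (0 : ℝ) 1) (hb : b ∈ Icc (0 : ℝ) 1) :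
    |a - b| ∈ Icc (0 : ℝ) 1 :=
  ⟨abs_nonneg _, by simpa [Real.dist_eq] using Real.dist_le_of_mem_Icc_01 ha hb⟩

section Measure

variable {X : Type*} [MeasurableSpace X] {μ : Measure X}

lemma one_sub_le_measureReal [IsFiniteMeasure μ] {s : Set X} {δ : ℝ}
    (h : ENNReal.ofReal (1 - δ) ≤ μ s) : 1 - δ ≤ μ.real s :=
  (ENNReal.ofReal_le_iff_le_toReal (measure_ne_top μ s)).1 h

lemma nonneg_of_ofReal_one_sub_le_s8 [IsProbabilityMeasure μ] {s : Set X} {δ : ℝ}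
    (h : ENNReal.ofReal (1 - δ) ≤ μ s) : 0 ≤ δ := by
  linarith [one_sub_le_measureReal h, measureReal_le_one (μ := μ) (s := s)]

lemma measureReal_compl_le [IsProbabilityMeasure μ] {s : Set X} {δ : ℝ} (hs : MeasurableSet s)
    (h : ENNReal.ofReal (1 - δ) ≤ μ s) : μ.real sᶜ ≤ δ := by
  rw [probReal_compl_eq_one_sub hs]
  linarith [one_sub_le_measureReal h]

lemma integrable_of_mem_Icc [IsFiniteMeasure μ] {u : X → ℝ} (hu : Measurable u)
    (hu01 : ∀ x, u x ∈ Icc (0 : ℝ) 1) : Integrable u μ :=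
  Integrable.of_bound hu.aestronglyMeasurable 1 <| ae_of_all _ fun x => by
    rw [Real.norm_eq_abs, abs_of_nonneg (hu01 x).1]
    exact (hu01 x).2

lemma integrable_abs_sub_of_mem_Icc [IsFiniteMeasure μ] {u v : X → ℝ} (hu : Measurable u)
    (hv : Measurable v) (hu01 : ∀ x, u x ∈ Icc (0 : ℝ) 1) (hv01 : ∀ x, v x ∈ Icc (0 : ℝ) 1) :
    Integrable (fun x => |u x - v x|) μ :=
  integrable_of_mem_Icc (hu.sub hv).abs fun x => abs_sub_mem_Icc_of_mem_Icc (hu01 x) (hv01 x)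

lemma integral_abs_sub_sub_abs_sub_le [IsFiniteMeasure μ] {h u v : X → ℝ} (hh : Measurable h)
    (hu : Measurable u) (hv : Measurable v) (hu01 : ∀ x, u x ∈ Icc (0 : ℝ) 1)
    (hv01 : ∀ x, v x ∈ Icc (0 : ℝ) 1) :
    ∫ x, (|h x - u x| - |h x - v x|) ∂μ ≤ ∫ x, |u x - v x| ∂μ := by
  have huv := integrable_abs_sub_of_mem_Icc (μ := μ) hu hv hu01 hv01
  have hq : Measurable fun x => |h x - u x| - |h x - v x| := (hh.sub hu).abs.sub (hh.sub hv).abs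
  refine integral_mono (huv.mono hq.aestronglyMeasurable (ae_of_all _ fun x => ?_)) huv fun x => ?_
  · simpa [abs_sub_comm (v x)] using abs_abs_sub_abs_le_abs_sub (h x - u x) (h x - v x)
  · simpa [abs_sub_comm (v x)] using abs_sub_abs_le_abs_sub (h x - u x) (h x - v x)

lemma integral_le_of_eqOn_zero [IsProbabilityMeasure μ] {u : X → ℝ} (hu : Measurable u)
    (hu01 : ∀ x, u x ∈ Icc (0 : ℝ) 1) {s : Set X} (hs : EqOn u 0 s) {δ : ℝ}
    (h : ENNReal.ofReal (1 - δ) ≤ μ s) : ∫ x, u x ∂μ ≤ δ := by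
  have hN : MeasurableSet (u ⁻¹' {0}) := hu (measurableSet_singleton 0)
  calc ∫ x, u x ∂μ ≤ ∫ x, (u ⁻¹' {0})ᶜ.indicator 1 x ∂μ := by
        refine integral_mono ?_ ((integrable_const (1 : ℝ)).indicator hN.compl) fun x => ?_
        · exact integrable_of_mem_Icc hu hu01
        · by_cases hx : u x = 0
          · simp [hx]
          · simp [hx, (hu01 x).2]
    _ = μ.real (u ⁻¹' {0})ᶜ := integral_indicator_one hN.compl
    _ ≤ δ := measureReal_compl_le hN (h.trans (measure_mono fun x hx => hs hx))

end Measure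

section Geometry

variable {X Z : Type*} [PseudoMetricSpace Z]

lemma chain_mem_of_separated {A A' : Set Z} {Δ : ℝ} (hsep : ∀ a ∈ A, ∀ b ∈ A', Δ ≤ dist a b)
    {z : ℕ → Z} {m : ℕ} (hz : ∀ i ≤ m, z i ∈ A ∪ A')
    (hstep : ∀ i < m, dist (z i) (z (i + 1)) < Δ) (h0 : z 0 ∈ A) : ∀ i ≤ m, z i ∈ A := by
  intro i
  induction i with
  | zero => exact fun _ => h0
  | succ i ih =>
    intro hi
    exact (hz (i + 1) hi).resolve_right fun hA' =>
      (hstep i hi).not_ge (hsep _ (ih (Nat.le_of_succ_le hi)) _ hA')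

variable {f : X → ℝ} {φ : X → Z} {C0 C1 : Set X} {L Δ : ℝ}

lemma indicator_thickening_image_eq (hΔ : 0 < Δ) (hC0 : ∀ x ∈ C0, f x = 0)
    (hC1 : ∀ x ∈ C1, f x = 1) (hsep : ∀ x0 ∈ C0, ∀ x1 ∈ C1, Δ ≤ dist (φ x0) (φ x1)) :
    ∀ x ∈ C0 ∪ C1, (thickening Δ (φ '' C1)).indicator 1 (φ x) = f x := by
  rintro x (hx | hx)
  · have hD : φ x ∉ thickening Δ (φ '' C1) := by
      rw [mem_thickening_iff]
      rintro ⟨_, ⟨y, hy, rfl⟩, hd⟩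
      exact hd.not_ge (hsep x hx y hy)
    simp [hD, hC0 x hx]
  · simp [self_subset_thickening hΔ _ (mem_image_of_mem φ hx), hC1 x hx]

variable [PseudoMetricSpace X]

lemma dist_lt_of_dist_lt_div_s8 (hΔ : 0 < Δ)
    (hLip : ∀ x1 x2, dist (φ x1) (φ x2) ≤ L * dist x1 x2) {x y : X} (hxy : dist x y < Δ / L) :
    dist (φ x) (φ y) < Δ := by
  rcases le_or_gt L 0 with hL | hL
  · exact (hLip x y).trans_lt ((mul_nonpos_of_nonpos_of_nonneg hL dist_nonneg).trans_lt hΔ)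
  · calc dist (φ x) (φ y) ≤ L * dist x y := hLip x y
      _ < L * (Δ / L) := mul_lt_mul_of_pos_left hxy hL
      _ = Δ := mul_div_cancel₀ Δ hL.ne'

lemma exists_mem_clusters_of_chain (hΔ : 0 < Δ)
    (hLip : ∀ x1 x2, dist (φ x1) (φ x2) ≤ L * dist x1 x2)
    (hC0 : ∀ x ∈ C0, f x = 0) (hC1 : ∀ x ∈ C1, f x = 1)
    (hsep : ∀ x0 ∈ C0, ∀ x1 ∈ C1, Δ ≤ dist (φ x0) (φ x1))
    {CT : Set X} (hCTim : φ '' CT ⊆ φ '' (C0 ∪ C1))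
    (hCTconn : ∀ x ∈ CT, ∃ x' ∈ CT ∩ (C0 ∪ C1), f x' = f x ∧
      ∃ (m : ℕ) (c : ℕ → X), c 0 = x ∧ c m = x' ∧ (∀ i ≤ m, c i ∈ CT) ∧
        ∀ i < m, dist (c i) (c (i + 1)) < Δ / L)
    {x : X} (hx : x ∈ CT) : ∃ y ∈ C0 ∪ C1, φ y = φ x ∧ f y = f x := by
  obtain ⟨y, hy, hφy⟩ := hCTim (mem_image_of_mem φ hx)
  obtain ⟨_, ⟨-, hx'⟩, hfx', m, c, rfl, rfl, hcCT, hstep⟩ := hCTconn x hx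
  refine ⟨y, hy, hφy, hfx' ▸ ?_⟩
  have hsep' : ∀ a ∈ φ '' C0, ∀ b ∈ φ '' C1, Δ ≤ dist a b := by
    rintro _ ⟨x0, hx0, rfl⟩ _ ⟨x1, hx1, rfl⟩
    exact hsep x0 hx0 x1 hx1
  have hdisj (a : Z) (h0 : a ∈ φ '' C0) (h1 : a ∈ φ '' C1) : False :=
    (hsep' a h0 a h1).not_gt (by simpa using hΔ)
  -- `φ ∘ c` never jumps between the `Δ`-separated images of the clusters.
  have hchain : ∀ i ≤ m, φ (c i) ∈ φ '' C0 ∪ φ '' C1 := fun i hi =>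
    image_union φ C0 C1 ▸ hCTim (mem_image_of_mem φ (hcCT i hi))
  have hzstep : ∀ i < m, dist (φ (c i)) (φ (c (i + 1))) < Δ := fun i hi =>
    dist_lt_of_dist_lt_div_s8 hΔ hLip (hstep i hi)
  rcases hy with hy | hy <;> rcases hx' with hx' | hx'
  · rw [hC0 y hy, hC0 _ hx']
  · refine (hdisj _ ?_ (mem_image_of_mem φ hx')).elim
    exact chain_mem_of_separated hsep' hchain hzstep (hφy ▸ mem_image_of_mem φ hy) m le_rfl
  · refine (hdisj _ (mem_image_of_mem φ hx') ?_).elim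
    refine chain_mem_of_separated (fun a ha b hb => dist_comm a b ▸ hsep' b hb a ha)
      (fun i hi => (hchain i hi).symm) hzstep (hφy ▸ mem_image_of_mem φ hy) m le_rfl
  · rw [hC1 y hy, hC1 _ hx']

end Geometry

section Latent

variable {X Z : Type*} [MeasurableSpace X] [MeasurableSpace Z]

lemma integral_abs_sub_le_of_restrict_le_smul {μ ν : Measure Z} [IsFiniteMeasure μ]
    [IsFiniteMeasure ν] {B : Set Z} (hB : MeasurableSet B) {c : ℝ} (hc : 0 ≤ c)
    (hμν : μ.restrict B ≤ ENNReal.ofReal c • ν.restrict B) {u v w : Z → ℝ}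
    (hu : Measurable u) (hv : Measurable v) (hw : Measurable w)
    (hu01 : ∀ z, u z ∈ Icc (0 : ℝ) 1) (hv01 : ∀ z, v z ∈ Icc (0 : ℝ) 1)
    (hw01 : ∀ z, w z ∈ Icc (0 : ℝ) 1) :
    ∫ z, |u z - v z| ∂μ ≤ μ.real Bᶜ + ∫ z, |u z - w z| ∂μ + c * ∫ z, |v z - w z| ∂ν := by
  have huv := integrable_abs_sub_of_mem_Icc (μ := μ) hu hv hu01 hv01
  have huw := integrable_abs_sub_of_mem_Icc (μ := μ) hu hw hu01 hw01
  have hvw := integrable_abs_sub_of_mem_Icc (μ := μ) hv hw hv01 hw01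
  have hvwν := integrable_abs_sub_of_mem_Icc (μ := ν) hv hw hv01 hw01
  have hBc : ∫ z in Bᶜ, |u z - v z| ∂μ ≤ μ.real Bᶜ := by
    have := norm_setIntegral_le_of_norm_le_const (f := fun z => |u z - v z|)
      (measure_lt_top μ Bᶜ) (C := 1)
      fun z _ => by simpa using (abs_sub_mem_Icc_of_mem_Icc (hu01 z) (hv01 z)).2
    rw [Real.norm_eq_abs, one_mul] at this
    exact (le_abs_self _).trans this
  have hOnB : ∫ z in B, |u z - v z| ∂μ ≤ ∫ z in B, |u z - w z| ∂μ + ∫ z in B, |v z - w z| ∂μ := by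
    rw [← integral_add huw.integrableOn hvw.integrableOn]
    refine setIntegral_mono huv.integrableOn (huw.add hvw).integrableOn fun z => ?_
    simpa only [abs_sub_comm (w z)] using abs_sub_le (u z) (w z) (v z)
  have hchange : ∫ z in B, |v z - w z| ∂μ ≤ c * ∫ z in B, |v z - w z| ∂ν := by
    calc ∫ z in B, |v z - w z| ∂μ
        ≤ ∫ z, |v z - w z| ∂(ENNReal.ofReal c • ν.restrict B) :=
          integral_mono_measure hμν (ae_of_all _ fun _ => abs_nonneg _)
            (hvwν.restrict.smul_measure ENNReal.ofReal_ne_top)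
      _ = c * ∫ z in B, |v z - w z| ∂ν := by
          rw [integral_smul_measure, ENNReal.toReal_ofReal hc, smul_eq_mul]
  have hBu := setIntegral_le_integral (s := B) huw (ae_of_all _ fun z => abs_nonneg (u z - w z))
  have hBv := setIntegral_le_integral (s := B) hvwν (ae_of_all _ fun z => abs_nonneg (v z - w z))
  rw [← integral_add_compl hB huv]
  nlinarith [mul_le_mul_of_nonneg_left hBv hc]

variable {μ : Measure X} {f : X → ℝ} {φ : X → Z} {g : Z → ℝ}

lemma setIntegral_map_eq_of_condExp_ae_eq [IsFiniteMeasure μ] (hf : Integrable f μ)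
    (hφ : Measurable φ) (hg : Measurable g)
    (hcond : μ[f | MeasurableSpace.comap φ inferInstance] =ᵐ[μ] fun x => g (φ x))
    {A : Set Z} (hA : MeasurableSet A) :
    ∫ z in A, g z ∂(μ.map φ) = ∫ x in φ ⁻¹' A, f x ∂μ := by
  rw [setIntegral_map hA hg.aestronglyMeasurable hφ.aemeasurable,
    ← setIntegral_condExp hφ.comap_le hf ⟨A, hA, rfl⟩]
  exact setIntegral_congr_ae (hφ hA) (hcond.mono fun x hx _ => hx.symm)

lemma integral_abs_sub_indicator_map_eq [IsFiniteMeasure μ] (hf : Measurable f)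
    (hf01 : ∀ x, f x ∈ Icc (0 : ℝ) 1) (hφ : Measurable φ) (hg : Measurable g)
    (hg01 : ∀ z, g z ∈ Icc (0 : ℝ) 1)
    (hcond : μ[f | MeasurableSpace.comap φ inferInstance] =ᵐ[μ] fun x => g (φ x))
    {D : Set Z} (hD : MeasurableSet D) :
    ∫ z, |g z - D.indicator 1 z| ∂(μ.map φ) = ∫ x, |f x - D.indicator 1 (φ x)| ∂μ := by
  have hfi := integrable_of_mem_Icc (μ := μ) hf hf01
  have hgi := integrable_of_mem_Icc (μ := μ.map φ) hg hg01
  have hψ : Measurable (D.indicator (1 : Z → ℝ)) := measurable_one.indicator hD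
  have hin : ∫ z in D, |g z - D.indicator 1 z| ∂(μ.map φ)
      = ∫ x in φ ⁻¹' D, |f x - D.indicator 1 (φ x)| ∂μ := by
    calc ∫ z in D, |g z - D.indicator 1 z| ∂(μ.map φ)
        = ∫ z in D, (1 - g z) ∂(μ.map φ) :=
          setIntegral_congr_fun hD fun z hz => by
            simp [hz, abs_of_nonpos (sub_nonpos.2 (hg01 z).2)]
      _ = ∫ x in φ ⁻¹' D, (1 - f x) ∂μ := by
          rw [integral_sub (integrable_const 1).integrableOn hgi.integrableOn,
            integral_sub (integrable_const 1).integrableOn hfi.integrableOn, setIntegral_const,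
            setIntegral_const, setIntegral_map_eq_of_condExp_ae_eq hfi hφ hg hcond hD,
            map_measureReal_apply hφ hD]
      _ = ∫ x in φ ⁻¹' D, |f x - D.indicator 1 (φ x)| ∂μ :=
          setIntegral_congr_fun (hφ hD) fun x hx => by
            simp [show φ x ∈ D from hx, abs_of_nonpos (sub_nonpos.2 (hf01 x).2)]
  have hout : ∫ z in Dᶜ, |g z - D.indicator 1 z| ∂(μ.map φ)
      = ∫ x in (φ ⁻¹' D)ᶜ, |f x - D.indicator 1 (φ x)| ∂μ := by
    calc ∫ z in Dᶜ, |g z - D.indicator 1 z| ∂(μ.map φ)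
        = ∫ z in Dᶜ, g z ∂(μ.map φ) :=
          setIntegral_congr_fun hD.compl fun z hz => by
            simp [show z ∉ D from hz, abs_of_nonneg (hg01 z).1]
      _ = ∫ x in (φ ⁻¹' D)ᶜ, f x ∂μ :=
          setIntegral_map_eq_of_condExp_ae_eq hfi hφ hg hcond hD.compl
      _ = ∫ x in (φ ⁻¹' D)ᶜ, |f x - D.indicator 1 (φ x)| ∂μ :=
          setIntegral_congr_fun (hφ hD).compl fun x hx => by
            simp [show φ x ∉ D from hx, abs_of_nonneg (hf01 x).1]
  rw [← integral_add_compl hD (integrable_abs_sub_of_mem_Icc hg hψ hg01 (indicator_one_mem_Icc D)),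
    ← integral_add_compl (hφ hD) (integrable_abs_sub_of_mem_Icc (v := fun x => D.indicator 1 (φ x))
      hf (hψ.comp hφ) hf01 fun x => indicator_one_mem_Icc D (φ x)), hin, hout]

lemma integral_abs_sub_indicator_map_le [IsProbabilityMeasure μ] (hf : Measurable f)
    (hf01 : ∀ x, f x ∈ Icc (0 : ℝ) 1) (hφ : Measurable φ) (hg : Measurable g)
    (hg01 : ∀ z, g z ∈ Icc (0 : ℝ) 1)
    (hcond : μ[f | MeasurableSpace.comap φ inferInstance] =ᵐ[μ] fun x => g (φ x))
    {D : Set Z} (hD : MeasurableSet D) {s : Set X} (hs : ∀ x ∈ s, D.indicator 1 (φ x) = f x)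
    {δ : ℝ} (hmass : ENNReal.ofReal (1 - δ) ≤ μ s) :
    ∫ z, |g z - D.indicator 1 z| ∂(μ.map φ) ≤ δ := by
  rw [integral_abs_sub_indicator_map_eq hf hf01 hφ hg hg01 hcond hD]
  exact integral_le_of_eqOn_zero (hf.sub ((measurable_one.indicator hD).comp hφ)).abs
    (fun x => abs_sub_mem_Icc_of_mem_Icc (hf01 x) (indicator_one_mem_Icc D (φ x)))
    (fun x hx => by simp [hs x hx]) hmass

end Latent

theorem label_consistency_term_bound_general
    {X Z : Type*} [MetricSpace X] [MetricSpace Z]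
    [MeasurableSpace X] [MeasurableSpace Z] [BorelSpace Z]
    (pS pT : Measure X) [IsProbabilityMeasure pS] [IsProbabilityMeasure pT]
    (f : X → ℝ) (hf : Measurable f) (hf01 : ∀ x, f x = 0 ∨ f x = 1)
    (φ : X → Z) (hφ : Measurable φ)
    (h : Z → ℝ) (hh : Measurable h)
    (gS gT : Z → ℝ) (hgS : Measurable gS) (hgT : Measurable gT)
    (hgS01 : ∀ z, gS z ∈ Set.Icc (0 : ℝ) 1) (hgT01 : ∀ z, gT z ∈ Set.Icc (0 : ℝ) 1)
    (hcondS : pS[f | MeasurableSpace.comap φ inferInstance] =ᵐ[pS] fun x => gS (φ x))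
    (hcondT : pT[f | MeasurableSpace.comap φ inferInstance] =ᵐ[pT] fun x => gT (φ x))
    (L β Δ δ1 δ2 δ3 : ℝ) (hβ : 0 ≤ β) (hΔ : 0 < Δ)
    (hLip : ∀ x1 x2, dist (φ x1) (φ x2) ≤ L * dist x1 x2)
    -- (i) imperfect asymmetrically-relaxed distribution alignment
    (B : Set Z) (hB : MeasurableSet B)
    (hratio : (pT.map φ).restrict B ≤ ENNReal.ofReal (1 + β) • (pS.map φ).restrict B)
    (hBmass : ENNReal.ofReal (1 - δ1) ≤ pT.map φ B)
    -- (ii) separated label-pure source clusters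
    (C0 C1 : Set X)
    (hCmass : ENNReal.ofReal (1 - δ2) ≤ pS (C0 ∪ C1))
    (hC0 : ∀ x ∈ C0, f x = 0) (hC1 : ∀ x ∈ C1, f x = 1)
    (hsep : ∀ x0 ∈ C0, ∀ x1 ∈ C1, Δ ≤ dist (φ x0) (φ x1))
    -- (iii) chain-connectedness of `CT` to the source clusters
    (CT : Set X) (hCTim : φ '' CT ⊆ φ '' (C0 ∪ C1))
    (hCTmass : ENNReal.ofReal (1 - δ3) ≤ pT CT)
    (hCTconn : ∀ x ∈ CT, ∃ x' ∈ CT ∩ (C0 ∪ C1), f x' = f x ∧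
      ∃ (m : ℕ) (c : ℕ → X), c 0 = x ∧ c m = x' ∧ (∀ i ≤ m, c i ∈ CT) ∧
        ∀ i < m, dist (c i) (c (i + 1)) < Δ / L) :
    ∫ z, (|h z - gT z| - |h z - gS z|) ∂(pT.map φ) ≤
      2 * δ1 + 2 * (1 + β) * δ2 + δ3 := by
  have : IsProbabilityMeasure (pT.map φ) := Measure.isProbabilityMeasure_map hφ.aemeasurable
  have : IsProbabilityMeasure (pS.map φ) := Measure.isProbabilityMeasure_map hφ.aemeasurable
  have hf01' : ∀ x, f x ∈ Icc (0 : ℝ) 1 := fun x => by rcases hf01 x with hx | hx <;> simp [hx]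
  set D := thickening Δ (φ '' C1)
  have hD : MeasurableSet D := isOpen_thickening.measurableSet
  have hψ : Measurable (D.indicator (1 : Z → ℝ)) := measurable_one.indicator hD
  have hψS : ∀ x ∈ C0 ∪ C1, D.indicator 1 (φ x) = f x :=
    indicator_thickening_image_eq hΔ hC0 hC1 hsep
  have hψT : ∀ x ∈ CT, D.indicator 1 (φ x) = f x := fun x hx => by
    obtain ⟨y, hy, hφy, hfy⟩ := exists_mem_clusters_of_chain hΔ hLip hC0 hC1 hsep hCTim hCTconn hx
    rw [← hφy, hψS y hy, hfy]
  have hT := integral_abs_sub_indicator_map_le hf hf01' hφ hgT hgT01 hcondT hD hψT hCTmass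
  have hS := integral_abs_sub_indicator_map_le hf hf01' hφ hgS hgS01 hcondS hD hψS hCmass
  have hBc := measureReal_compl_le hB hBmass
  have hδ1 := nonneg_of_ofReal_one_sub_le_s8 hBmass
  have hδ2 := nonneg_of_ofReal_one_sub_le_s8 hCmass
  calc ∫ z, (|h z - gT z| - |h z - gS z|) ∂(pT.map φ)
      ≤ ∫ z, |gT z - gS z| ∂(pT.map φ) :=
        integral_abs_sub_sub_abs_sub_le hh hgT hgS hgT01 hgS01
    _ ≤ (pT.map φ).real Bᶜ + ∫ z, |gT z - D.indicator 1 z| ∂(pT.map φ)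
          + (1 + β) * ∫ z, |gS z - D.indicator 1 z| ∂(pS.map φ) :=
        integral_abs_sub_le_of_restrict_le_smul hB (by linarith) hratio hgT hgS hψ hgT01 hgS01
          (indicator_one_mem_Icc D)
    _ ≤ δ1 + δ3 + (1 + β) * δ2 := by gcongr
    _ ≤ 2 * δ1 + 2 * (1 + β) * δ2 + δ3 := by nlinarith

/-- **label-consistency term bound.** Under (i) imperfect
asymmetrically-relaxed alignment on a set `B` (`density ratio ≤ 1+β`,
`pT.map φ B ≥ 1−δ1`), (ii) `Δ`-separated disjoint label-pure source clusters `C0, C1`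
with `pS (C0 ∪ C1) ≥ 1−δ2`, and (iii) a set `CT` of target mass `≥ 1−δ3` mapped into
`φ '' (C0 ∪ C1)` and chain-connected (with steps `< Δ/L`) within `CT` to label-consistent
points of `C0 ∪ C1`, the label-consistency term satisfies
`∫ (r_T − r_S) d(pT.map φ) ≤ 2δ1 + 2(1+β)δ2 + δ3`, where `r_U(z) = |h z − g_U z|` and
`g_U = f_U^φ` is a version of the conditional expectation of `f` given `φ` under `p_U`. -/
theorem label_consistency_term_bound
    {X Z : Type*} [MetricSpace X] [MetricSpace Z]
    [MeasurableSpace X] [BorelSpace X] [MeasurableSpace Z] [BorelSpace Z]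
    (pS pT : Measure X) [IsProbabilityMeasure pS] [IsProbabilityMeasure pT]
    (f : X → ℝ) (hf : Measurable f) (hf01 : ∀ x, f x = 0 ∨ f x = 1)
    (φ : X → Z) (hφ : Measurable φ)
    (h : Z → ℝ) (hh : Measurable h) (hh01 : ∀ z, h z = 0 ∨ h z = 1)
    (gS gT : Z → ℝ) (hgS : Measurable gS) (hgT : Measurable gT)
    (hgS01 : ∀ z, gS z ∈ Set.Icc (0 : ℝ) 1) (hgT01 : ∀ z, gT z ∈ Set.Icc (0 : ℝ) 1)
    (hcondS : pS[f | MeasurableSpace.comap φ inferInstance] =ᵐ[pS] fun x => gS (φ x))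
    (hcondT : pT[f | MeasurableSpace.comap φ inferInstance] =ᵐ[pT] fun x => gT (φ x))
    (L β Δ δ1 δ2 δ3 : ℝ) (hβ : 0 ≤ β) (hΔ : 0 < Δ)
    (hLip : ∀ x1 x2, dist (φ x1) (φ x2) ≤ L * dist x1 x2)
    -- (i) imperfect asymmetrically-relaxed distribution alignment
    (B : Set Z) (hB : MeasurableSet B)
    (hratio : (pT.map φ).restrict B ≤ ENNReal.ofReal (1 + β) • (pS.map φ).restrict B)
    (hBmass : ENNReal.ofReal (1 - δ1) ≤ pT.map φ B)
    -- (ii) separated label-pure source clusters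
    (C0 C1 : Set X) (hdisj : Disjoint C0 C1)
    (hCmass : ENNReal.ofReal (1 - δ2) ≤ pS (C0 ∪ C1))
    (hC0 : ∀ x ∈ C0, f x = 0) (hC1 : ∀ x ∈ C1, f x = 1)
    (hsep : ∀ x0 ∈ C0, ∀ x1 ∈ C1, Δ ≤ dist (φ x0) (φ x1))
    -- (iii) chain-connectedness of `CT` to the source clusters
    (CT : Set X) (hCTim : φ '' CT ⊆ φ '' (C0 ∪ C1))
    (hCTmass : ENNReal.ofReal (1 - δ3) ≤ pT CT)
    (hCTconn : ∀ x ∈ CT, ∃ x' ∈ CT ∩ (C0 ∪ C1), f x' = f x ∧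
      ∃ (m : ℕ) (c : ℕ → X), c 0 = x ∧ c m = x' ∧ (∀ i ≤ m, c i ∈ CT) ∧
        ∀ i < m, dist (c i) (c (i + 1)) < Δ / L) :
    ∫ z, (|h z - gT z| - |h z - gS z|) ∂(pT.map φ) ≤
      2 * δ1 + 2 * (1 + β) * δ2 + δ3 :=
  label_consistency_term_bound_general pS pT f hf hf01 φ hφ h hh gS gT hgS hgT hgS01 hgT01 hcondS
    hcondT L β Δ δ1 δ2 δ3 hβ hΔ hLip B hB hratio hBmass C0 C1 hCmass hC0 hC1 hsep CT hCTim hCTmass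
    hCTconn
end

section
/- The partially linearized function f̄_β is continuous on (0,∞), convex, and satisfies f̄_β(1) = 0. -/
/-!
Up to the additive constant `C_{f,β}`, `f̄_β` is `f` continued past `c = 1/(1+β)` by its
tangent line at `c`. This continuation is differentiable with derivative `f' (min u c)`, which
is monotone because `f'` is, so it is continuous and convex. At `u = 1 ≥ c` it lies on the
line `f' c * (u - 1)`, which vanishes there.
-/

/-- The partially linearized function `f̄_β`: it agrees with `f` (up to the additive
constant `C_{f,β}`) on `(0, 1/(1+β)]` and is linear (the tangent of `f` at `1/(1+β)`,
normalized so that `f̄_β 1 = 0`) on `(1/(1+β), ∞)`. Here `f'` denotes the derivative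
of `f`. -/
noncomputable def partiallyLinearized (f f' : ℝ → ℝ) (β : ℝ) : ℝ → ℝ := fun u =>
  if u ≤ 1 / (1 + β) then
    f u + (-f (1 / (1 + β)) + f' (1 / (1 + β)) * (1 / (1 + β)) - f' (1 / (1 + β)))
  else f' (1 / (1 + β)) * u - f' (1 / (1 + β))

open Set

theorem hasDerivAt_ite_le {g₁ g₂ : ℝ → ℝ} {c d : ℝ}
    (h₁ : HasDerivWithinAt g₁ d (Iic c) c) (h₂ : HasDerivWithinAt g₂ d (Ici c) c)
    (hc : g₁ c = g₂ c) :
    HasDerivAt (fun u => if u ≤ c then g₁ u else g₂ u) d c := by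
  have hleft : HasDerivWithinAt (fun u => if u ≤ c then g₁ u else g₂ u) d (Iic c) c :=
    h₁.congr_of_mem (fun u hu => if_pos hu) self_mem_Iic
  have hright : HasDerivWithinAt (fun u => if u ≤ c then g₁ u else g₂ u) d (Ici c) c := by
    refine h₂.congr (fun u hu => ?_) (by simp [hc])
    rcases (mem_Ici.mp hu).eq_or_lt with rfl | hlt
    · simp [hc]
    · exact if_neg hlt.not_ge
  simpa only [Iic_union_Ici, hasDerivWithinAt_univ] using hleft.union hright

theorem ConvexOn.monotoneOn_of_hasDerivAt {s : Set ℝ} {f f' : ℝ → ℝ} (hf : ConvexOn ℝ s f)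
    (hderiv : ∀ u ∈ s, HasDerivAt f (f' u) u) : MonotoneOn f' s := by
  intro x hx y hy hxy
  rcases hxy.eq_or_lt with rfl | hlt
  · rfl
  exact (hf.le_slope_of_hasDerivAt hx hy hlt (hderiv x hx)).trans
    (hf.slope_le_of_hasDerivAt hx hy hlt (hderiv y hy))

noncomputable def tangentExtension (f f' : ℝ → ℝ) (c : ℝ) : ℝ → ℝ := fun u =>
  if u ≤ c then f u else f c + f' c * (u - c)

section tangentExtension

variable {f f' : ℝ → ℝ} {c : ℝ}

theorem hasDerivAt_tangentExtension {u : ℝ} (hf : HasDerivAt f (f' (min u c)) (min u c)) :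
    HasDerivAt (tangentExtension f f' c) (f' (min u c)) u := by
  have hline : ∀ v, HasDerivAt (fun v => f c + f' c * (v - c)) (f' c) v := fun v => by
    simpa using ((hasDerivAt_id v).sub_const c).const_mul (f' c) |>.const_add (f c)
  rcases lt_trichotomy u c with hlt | rfl | hgt
  · rw [min_eq_left hlt.le] at hf ⊢
    refine hf.congr_of_eventuallyEq ?_
    filter_upwards [Iio_mem_nhds hlt] with v hv using if_pos hv.le
  · rw [min_self] at hf ⊢
    exact hasDerivAt_ite_le hf.hasDerivWithinAt (hline u).hasDerivWithinAt (by simp)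
  · rw [min_eq_right hgt.le]
    refine (hline u).congr_of_eventuallyEq ?_
    filter_upwards [Ioi_mem_nhds hgt] with v hv using if_neg hv.not_ge

theorem hasDerivAt_tangentExtension_of_mem {s : Set ℝ}
    (hderiv : ∀ u ∈ s, HasDerivAt f (f' u) u) (hc : c ∈ s) {u : ℝ} (hu : u ∈ s) :
    HasDerivAt (tangentExtension f f' c) (f' (min u c)) u :=
  hasDerivAt_tangentExtension (hderiv _ (min_rec' (· ∈ s) hu hc))

theorem continuousOn_tangentExtension {s : Set ℝ}
    (hderiv : ∀ u ∈ s, HasDerivAt f (f' u) u) (hc : c ∈ s) :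
    ContinuousOn (tangentExtension f f' c) s :=
  fun _ hu => (hasDerivAt_tangentExtension_of_mem hderiv hc hu).continuousAt.continuousWithinAt

theorem convexOn_tangentExtension {s : Set ℝ} (hf : ConvexOn ℝ s f)
    (hderiv : ∀ u ∈ s, HasDerivAt f (f' u) u) (hc : c ∈ s) :
    ConvexOn ℝ s (tangentExtension f f' c) := by
  have hderiv' : ∀ u ∈ interior s, HasDerivAt (tangentExtension f f' c) (f' (min u c)) u :=
    fun u hu => hasDerivAt_tangentExtension_of_mem hderiv hc (interior_subset hu)
  have hmono : MonotoneOn f' s := hf.monotoneOn_of_hasDerivAt hderiv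
  refine MonotoneOn.convexOn_of_deriv hf.1 (continuousOn_tangentExtension hderiv hc)
    (fun u hu => (hderiv' u hu).differentiableAt.differentiableWithinAt) ?_
  intro u hu v hv huv
  rw [(hderiv' u hu).deriv, (hderiv' v hv).deriv]
  exact hmono (min_rec' (· ∈ s) (interior_subset hu) hc)
    (min_rec' (· ∈ s) (interior_subset hv) hc) (min_le_min_right c huv)

end tangentExtension

theorem partiallyLinearized_eq_tangentExtension_add_const (f f' : ℝ → ℝ) (β : ℝ) :
    partiallyLinearized f f' β = fun u => tangentExtension f f' (1 / (1 + β)) u +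
      (-f (1 / (1 + β)) + f' (1 / (1 + β)) * (1 / (1 + β)) - f' (1 / (1 + β))) := by
  funext u
  unfold partiallyLinearized tangentExtension
  split_ifs <;> ring

theorem partiallyLinearized_apply_one {f f' : ℝ → ℝ} {β : ℝ} (hβ : 0 ≤ β) (hf1 : f 1 = 0) :
    partiallyLinearized f f' β 1 = 0 := by
  have hc : 1 / (1 + β) ≤ 1 := by rw [div_le_one (by linarith)]; linarith
  unfold partiallyLinearized
  split_ifs with h
  · rw [le_antisymm hc h, hf1]; ring
  · ring

theorem partiallyLinearized_continuousOn_convexOn_apply_one_general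
    (f f' : ℝ → ℝ) (β : ℝ) (hβ : 0 ≤ β)
    (hconv : ConvexOn ℝ (Set.Ioi 0) f)
    (hderiv : ∀ u ∈ Set.Ioi (0 : ℝ), HasDerivAt f (f' u) u)
    (hf1 : f 1 = 0) :
    ContinuousOn (partiallyLinearized f f' β) (Set.Ioi 0) ∧
    ConvexOn ℝ (Set.Ioi 0) (partiallyLinearized f f' β) ∧
    partiallyLinearized f f' β 1 = 0 := by
  have hc : 1 / (1 + β) ∈ Ioi (0 : ℝ) := mem_Ioi.mpr (by positivity)
  refine ⟨?_, ?_, partiallyLinearized_apply_one hβ hf1⟩ <;>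
    rw [partiallyLinearized_eq_tangentExtension_add_const]
  · exact (continuousOn_tangentExtension hderiv hc).add continuousOn_const
  · exact (convexOn_tangentExtension hconv hderiv hc).add_const _

/-- If `f` is convex, continuous and differentiable on `(0,∞)` with
`f 1 = 0`, and `β ≥ 0`, then the partially linearized function `f̄_β` is continuous on
`(0,∞)`, convex on `(0,∞)`, and satisfies `f̄_β 1 = 0`. -/
theorem partiallyLinearized_continuousOn_convexOn_apply_one
    (f f' : ℝ → ℝ) (β : ℝ) (hβ : 0 ≤ β)
    (hconv : ConvexOn ℝ (Set.Ioi 0) f)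
    (hcont : ContinuousOn f (Set.Ioi 0))
    (hderiv : ∀ u ∈ Set.Ioi (0 : ℝ), HasDerivAt f (f' u) u)
    (hf1 : f 1 = 0) :
    ContinuousOn (partiallyLinearized f f' β) (Set.Ioi 0) ∧
    ConvexOn ℝ (Set.Ioi 0) (partiallyLinearized f f' β) ∧
    partiallyLinearized f f' β 1 = 0 :=
  partiallyLinearized_continuousOn_convexOn_apply_one_general f f' β hβ hconv hderiv hf1
end

section
/- (β-admissibility of the partially linearized f-divergence.) Suppose additionally that f is strictly convex on (0, 1/(1+β)]. For probability densities p and q on Z, the divergence D_{f̄_β}(p, q) = ∫ p(z) f̄_β(q(z)/p(z)) dz is nonnegative, and D_{f̄_β}(p, q) = 0 if and only if p(z)/q(z) ≤ 1+β for (almost) all z (equivalently, q(z)/p(z) ≥ 1/(1+β) wherever p(z) > 0). -/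
open MeasureTheory

lemma tangent_le {f f' : ℝ → ℝ} (hconv : ConvexOn ℝ (Set.Ioi 0) f)
    (hderiv : ∀ u ∈ Set.Ioi (0 : ℝ), HasDerivAt f (f' u) u)
    {c u : ℝ} (hc : 0 < c) (hu : 0 < u) :
    f c + f' c * (u - c) ≤ f u := by
  rcases lt_trichotomy u c with h | h | h
  · have := hconv.slope_le_of_hasDerivAt (Set.mem_Ioi.2 hu) (Set.mem_Ioi.2 hc) h (hderiv c hc)
    rw [slope_def_field] at this
    have h2 : 0 < c - u := by linarith
    rw [div_le_iff₀ h2] at this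
    nlinarith
  · simp [h]
  · have := hconv.le_slope_of_hasDerivAt (Set.mem_Ioi.2 hc) (Set.mem_Ioi.2 hu) h (hderiv c hc)
    rw [slope_def_field] at this
    have h2 : 0 < u - c := by linarith
    rw [le_div_iff₀ h2] at this
    nlinarith

lemma tangent_lt {f f' : ℝ → ℝ} {c : ℝ} (hconv : ConvexOn ℝ (Set.Ioi 0) f)
    (hderiv : ∀ u ∈ Set.Ioi (0 : ℝ), HasDerivAt f (f' u) u)
    (hstrict : StrictConvexOn ℝ (Set.Ioc 0 c) f)
    {u : ℝ} (hc : 0 < c) (hu : 0 < u) (huc : u < c) :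
    f c + f' c * (u - c) < f u := by
  have hm0 : 0 < u / 2 + c / 2 := by positivity
  have hstep := hstrict.2 (Set.mem_Ioc.2 ⟨hu, huc.le⟩) (Set.mem_Ioc.2 ⟨hc, le_refl c⟩)
    (ne_of_lt huc) (by norm_num : (0:ℝ) < 1/2) (by norm_num : (0:ℝ) < 1/2) (by norm_num)
  simp only [smul_eq_mul] at hstep
  have hmeq : (1/2 : ℝ) * u + (1/2 : ℝ) * c = u / 2 + c / 2 := by ring
  rw [hmeq] at hstep
  have htan := tangent_le hconv hderiv hc hm0
  nlinarith [htan, hstep]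

lemma plin_key {f f' : ℝ → ℝ} {β : ℝ} (hβ : 0 ≤ β)
    (hconv : ConvexOn ℝ (Set.Ioi 0) f)
    (hderiv : ∀ u ∈ Set.Ioi (0 : ℝ), HasDerivAt f (f' u) u)
    (hstrict : StrictConvexOn ℝ (Set.Ioc 0 (1 / (1 + β))) f)
    {u : ℝ} (hu : 0 < u) :
    0 ≤ partiallyLinearized f f' β u - (f' (1/(1+β)) * u - f' (1/(1+β))) ∧
    (partiallyLinearized f f' β u - (f' (1/(1+β)) * u - f' (1/(1+β))) = 0 ↔ 1/(1+β) ≤ u) := by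
  have h1β : (0:ℝ) < 1 + β := by linarith
  have hc : 0 < 1/(1+β) := by positivity
  unfold partiallyLinearized
  by_cases h : u ≤ 1/(1+β)
  · rw [if_pos h]
    have heq : f u + (-f (1/(1+β)) + f' (1/(1+β)) * (1/(1+β)) - f' (1/(1+β)))
        - (f' (1/(1+β)) * u - f' (1/(1+β)))
        = f u - (f (1/(1+β)) + f' (1/(1+β)) * (u - 1/(1+β))) := by ring
    rw [heq]
    rcases h.lt_or_eq with hlt | heq2
    · have := tangent_lt hconv hderiv hstrict hc hu hlt
      constructor
      · linarith
      · constructor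
        · intro h0; linarith
        · intro h0; linarith
    · subst heq2
      have hval : f (1/(1+β)) - (f (1/(1+β)) + f' (1/(1+β)) * (1/(1+β) - 1/(1+β))) = 0 := by ring
      rw [hval]
      exact ⟨le_refl 0, by simp⟩
  · rw [if_neg h]
    push_neg at h
    constructor
    · simp
    · simp only [sub_self]
      exact ⟨fun _ => h.le, fun _ => trivial⟩


/-- **β-admissibility of the partially linearized f-divergence.** Let `f` be
convex, continuous and differentiable on `(0,∞)` with `f 1 = 0`, strictly convex on
`(0, 1/(1+β)]`, and `β ≥ 0`. For probability densities `p, q` (with common support) w.r.t.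
a base measure `μ`, the divergence `D_{f̄_β}(p,q) = ∫ p(z)·f̄_β(q(z)/p(z)) dμ(z)` is
nonnegative, and it vanishes iff `p(z) ≤ (1+β)·q(z)` for `μ`-almost all `z`. -/
theorem partiallyLinearized_fDiv_nonneg_and_eq_zero_iff
    {Z : Type*} [MeasurableSpace Z] (μ : Measure Z) [SigmaFinite μ]
    (f f' : ℝ → ℝ) (β : ℝ) (hβ : 0 ≤ β)
    (hconv : ConvexOn ℝ (Set.Ioi 0) f)
    (hcont : ContinuousOn f (Set.Ioi 0))
    (hderiv : ∀ u ∈ Set.Ioi (0 : ℝ), HasDerivAt f (f' u) u)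
    (hf1 : f 1 = 0)
    (hstrict : StrictConvexOn ℝ (Set.Ioc 0 (1 / (1 + β))) f)
    (p q : Z → ℝ) (hp : Measurable p) (hq : Measurable q)
    (hp0 : ∀ z, 0 ≤ p z) (hq0 : ∀ z, 0 ≤ q z)
    (hpint : ∫ z, p z ∂μ = 1) (hqint : ∫ z, q z ∂μ = 1)
    (hsupp : ∀ᵐ z ∂μ, (p z = 0 ↔ q z = 0))
    (hint : Integrable (fun z => p z * partiallyLinearized f f' β (q z / p z)) μ) :
    0 ≤ ∫ z, p z * partiallyLinearized f f' β (q z / p z) ∂μ ∧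
    ((∫ z, p z * partiallyLinearized f f' β (q z / p z) ∂μ) = 0 ↔
      ∀ᵐ z ∂μ, p z ≤ (1 + β) * q z) := by
  have h1β : (0:ℝ) < 1 + β := by linarith
  have hc : (0:ℝ) < 1/(1+β) := by positivity
  have hIp : Integrable p μ := by
    by_contra h; rw [integral_undef h] at hpint; norm_num at hpint
  have hIq : Integrable q μ := by
    by_contra h; rw [integral_undef h] at hqint; norm_num at hqint
  set G : Z → ℝ := fun z =>
    p z * partiallyLinearized f f' β (q z / p z) - f' (1/(1+β)) * (q z - p z) with hGdef
  have hI2 : Integrable (fun z => f' (1/(1+β)) * (q z - p z)) μ := by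
    exact (hIq.sub hIp).const_mul _
  have hGint : Integrable G μ := hint.sub hI2
  have hintsub : ∫ z, f' (1/(1+β)) * (q z - p z) ∂μ = 0 := by
    rw [integral_const_mul, integral_sub hIq hIp, hqint, hpint]; ring
  have hGeq : ∫ z, G z ∂μ = ∫ z, p z * partiallyLinearized f f' β (q z / p z) ∂μ := by
    simp only [hGdef]
    rw [integral_sub hint hI2, hintsub, sub_zero]
  have hGnn : ∀ᵐ z ∂μ, 0 ≤ G z := by
    filter_upwards [hsupp] with z hz
    rcases (hp0 z).eq_or_lt with hpz | hpz
    · have hqz : q z = 0 := hz.mp hpz.symm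
      simp only [hGdef, ← hpz, hqz]; ring_nf; simp
    · have hqz : 0 < q z := by
        rcases (hq0 z).eq_or_lt with h0 | h0
        · exact absurd (hz.mpr h0.symm) (ne_of_gt hpz)
        · exact h0
      have hu : 0 < q z / p z := div_pos hqz hpz
      obtain ⟨hge, _⟩ := plin_key hβ hconv hderiv hstrict hu
      have hrw : G z = p z * (partiallyLinearized f f' β (q z / p z)
          - (f' (1/(1+β)) * (q z / p z) - f' (1/(1+β)))) := by
        simp only [hGdef]
        field_simp
      rw [hrw]
      exact mul_nonneg hpz.le hge
  constructor
  · rw [← hGeq]; exact integral_nonneg_of_ae hGnn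
  · constructor
    · intro h0
      have hz0 : G =ᵐ[μ] 0 := by
        rw [← integral_eq_zero_iff_of_nonneg_ae hGnn hGint, hGeq]; exact h0
      filter_upwards [hz0, hsupp] with z hz hz2
      rcases (hp0 z).eq_or_lt with hpz | hpz
      · rw [← hpz]; exact mul_nonneg h1β.le (hq0 z)
      · have hqz : 0 < q z := by
          rcases (hq0 z).eq_or_lt with h0' | h0'
          · exact absurd (hz2.mpr h0'.symm) (ne_of_gt hpz)
          · exact h0'
        have hu : 0 < q z / p z := div_pos hqz hpz
        obtain ⟨_, hiff⟩ := plin_key hβ hconv hderiv hstrict hu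
        have hrw : G z = p z * (partiallyLinearized f f' β (q z / p z)
            - (f' (1/(1+β)) * (q z / p z) - f' (1/(1+β)))) := by
          simp only [hGdef]; field_simp
        have hz' : G z = 0 := hz
        rw [hrw] at hz'
        rcases mul_eq_zero.mp hz' with h | h
        · exact absurd h (ne_of_gt hpz)
        · have hle : 1/(1+β) ≤ q z / p z := hiff.mp h
          rw [div_le_div_iff₀ h1β hpz] at hle
          linarith
    · intro h
      rw [← hGeq]
      apply integral_eq_zero_of_ae
      filter_upwards [h, hsupp] with z hz hz2
      rcases (hp0 z).eq_or_lt with hpz | hpz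
      · have hqz : q z = 0 := hz2.mp hpz.symm
        simp only [hGdef, ← hpz, hqz]; ring_nf; simp
      · have hqz : 0 < q z := by
          nlinarith [hz, hq0 z]
        have hu : 0 < q z / p z := div_pos hqz hpz
        obtain ⟨_, hiff⟩ := plin_key hβ hconv hderiv hstrict hu
        have hle : 1/(1+β) ≤ q z / p z := by
          rw [div_le_div_iff₀ h1β hpz]; linarith
        have hrw : G z = p z * (partiallyLinearized f f' β (q z / p z)
            - (f' (1/(1+β)) * (q z / p z) - f' (1/(1+β)))) := by
          simp only [hGdef]; field_simp
        show G z = 0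
        rw [hrw, hiff.mpr hle, mul_zero]
end

section
/- (β-admissibility of the relaxed Wasserstein distance.) For probability measures p, q on a metric space (Z, d) (with finite first moments), W_β(p, q) ≥ 0, and W_β(p, q) = 0 if and only if p ≤ (1+β)q as measures (equivalently, p is absolutely continuous with respect to q with dp/dq ≤ 1+β q-almost everywhere). In particular, if p ≤ (1+β)q, the coupling γ supported on the diagonal with first marginal p achieves zero transport cost and lies in Π_β(p, q). -/
/-!
If the infimum vanishes, fix a closed set `C` and `δ > 0`: a coupling of cost below `δ ε`
carries at most `ε` of the `p`-mass of `C` outside the `δ`-thickening `C_δ` (Markov), while the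
mass it does carry into `C_δ` is bounded by `(1 + β) q(C_δ)`. Hence `p C ≤ (1 + β) q(C_δ)`, and
letting `δ → 0` gives `p C ≤ (1 + β) q C`; closed inner regularity of `p` extends this to all
measurable sets. Conversely, the diagonal coupling of `p` has zero cost.
-/

open MeasureTheory Metric Set Filter Topology
open scoped ENNReal

lemma ofReal_le_edist_of_mem_of_notMem_thickening {Z : Type*} [PseudoEMetricSpace Z]
    {C : Set Z} {δ : ℝ} {x y : Z} (hx : x ∈ C) (hy : y ∉ thickening δ C) :
    ENNReal.ofReal δ ≤ edist x y := by
  rw [mem_thickening_iff_infEDist_lt, not_lt] at hy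
  exact hy.trans ((infEDist_le_edist_of_mem hx).trans_eq (edist_comm y x))

namespace MeasureTheory.Measure

variable {Z : Type*} [MeasurableSpace Z]

lemma map_fst_map_diag (μ : Measure Z) : (μ.map fun z => (z, z)).map Prod.fst = μ := by
  rw [map_map measurable_fst (by fun_prop)]
  exact map_id

lemma map_snd_map_diag (μ : Measure Z) : (μ.map fun z => (z, z)).map Prod.snd = μ := by
  rw [map_map measurable_snd (by fun_prop)]
  exact map_id

lemma lintegral_edist_map_diag [PseudoEMetricSpace Z] (μ : Measure Z) :
    ∫⁻ w, edist w.1 w.2 ∂(μ.map fun z => (z, z)) = 0 :=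
  nonpos_iff_eq_zero.mp <| (lintegral_map_le _ _).trans_eq <| by simp

/-- For `c = 1 + β` this is the set `Π_β(p, q)`. -/
def relaxedCouplings (p q : Measure Z) (c : ℝ≥0∞) : Set (Measure (Z × Z)) :=
  {γ | γ.map Prod.fst = p ∧ γ.map Prod.snd ≤ c • q}

lemma map_diag_mem_relaxedCouplings {p q : Measure Z} {c : ℝ≥0∞} (h : p ≤ c • q) :
    p.map (fun z => (z, z)) ∈ relaxedCouplings p q c :=
  ⟨map_fst_map_diag p, (map_snd_map_diag p).trans_le h⟩

lemma le_of_forall_isClosed_le [TopologicalSpace Z] {μ ν : Measure Z} [IsFiniteMeasure μ]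
    [WeaklyRegular μ] (h : ∀ F, IsClosed F → μ F ≤ ν F) : μ ≤ ν := by
  refine le_iff.mpr fun A hA => ?_
  rw [hA.measure_eq_iSup_isClosed_of_ne_top (measure_ne_top μ A)]
  exact iSup₂_le fun F hFA => iSup_le fun hF => (h F hF).trans (measure_mono hFA)

variable [PseudoEMetricSpace Z] [OpensMeasurableSpace Z]

lemma measure_le_of_forall_le_measure_thickening {μ ν : Measure Z} [IsFiniteMeasure ν]
    {F : Set Z} (hF : IsClosed F) (h : ∀ δ > 0, μ F ≤ ν (thickening δ F)) : μ F ≤ ν F :=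
  ge_of_tendsto (tendsto_measure_thickening_of_isClosed ⟨1, one_pos, measure_ne_top ν _⟩ hF) <|
    eventually_nhdsWithin_of_forall h

lemma ofReal_mul_measure_prod_compl_thickening_le (γ : Measure (Z × Z)) {C : Set Z}
    (hC : MeasurableSet C) (δ : ℝ) :
    ENNReal.ofReal δ * γ (C ×ˢ (thickening δ C)ᶜ) ≤ ∫⁻ w, edist w.1 w.2 ∂γ := by
  have hs : MeasurableSet (C ×ˢ (thickening δ C)ᶜ) :=
    hC.prod isOpen_thickening.measurableSet.compl
  rw [← lintegral_indicator_const hs]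
  exact lintegral_mono <| indicator_le fun w hw =>
    ofReal_le_edist_of_mem_of_notMem_thickening hw.1 hw.2

lemma measure_le_mul_measure_thickening_add {p q : Measure Z} {c : ℝ≥0∞} {γ : Measure (Z × Z)}
    (hγ : γ ∈ relaxedCouplings p q c) {C : Set Z} (hC : MeasurableSet C) (δ : ℝ) :
    p C ≤ c * q (thickening δ C) + γ (C ×ˢ (thickening δ C)ᶜ) := by
  obtain ⟨hfst, hsnd⟩ := hγ
  set T := thickening δ C
  have hT : MeasurableSet T := isOpen_thickening.measurableSet
  calc p C = γ (Prod.fst ⁻¹' C) := by rw [← hfst, map_apply measurable_fst hC]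
    _ ≤ γ (Prod.snd ⁻¹' T ∪ C ×ˢ Tᶜ) := measure_mono fun w hw => by
        by_cases hwT : w.2 ∈ T
        exacts [Or.inl hwT, Or.inr ⟨hw, hwT⟩]
    _ ≤ γ (Prod.snd ⁻¹' T) + γ (C ×ˢ Tᶜ) := measure_union_le _ _
    _ ≤ c * q T + γ (C ×ˢ Tᶜ) := by
        gcongr
        rw [← map_apply measurable_snd hT, ← smul_eq_mul, ← smul_apply]
        exact hsnd T

lemma measure_le_mul_measure_thickening_of_iInf_eq_zero {p q : Measure Z} {c : ℝ≥0∞}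
    (h0 : ⨅ γ ∈ relaxedCouplings p q c, ∫⁻ w, edist w.1 w.2 ∂γ = 0) {C : Set Z}
    (hC : MeasurableSet C) {δ : ℝ} (hδ : 0 < δ) : p C ≤ c * q (thickening δ C) := by
  have hδ' : ENNReal.ofReal δ ≠ 0 := (ENNReal.ofReal_pos.mpr hδ).ne'
  refine ENNReal.le_of_forall_pos_le_add fun ε hε _ => ?_
  have hlt : ⨅ γ ∈ relaxedCouplings p q c, ∫⁻ w, edist w.1 w.2 ∂γ < ENNReal.ofReal δ * ε :=
    h0 ▸ ENNReal.mul_pos hδ' (by exact_mod_cast hε.ne')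
  obtain ⟨γ, hγ, hcost⟩ : ∃ γ ∈ relaxedCouplings p q c, ∫⁻ w, edist w.1 w.2 ∂γ < _ := by
    simpa only [iInf_lt_iff, exists_prop] using hlt
  have hleak : γ (C ×ˢ (thickening δ C)ᶜ) ≤ ε :=
    ((ENNReal.mul_lt_mul_iff_right hδ' ENNReal.ofReal_ne_top).mp
      ((ofReal_mul_measure_prod_compl_thickening_le γ hC δ).trans_lt hcost)).le
  exact (measure_le_mul_measure_thickening_add hγ hC δ).trans (by gcongr)

theorem iInf_lintegral_edist_eq_zero_iff [BorelSpace Z] {p q : Measure Z}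
    [IsFiniteMeasure p] [IsFiniteMeasure q] {c : ℝ≥0∞} (hc : c ≠ ∞) :
    ⨅ γ ∈ relaxedCouplings p q c, ∫⁻ w, edist w.1 w.2 ∂γ = 0 ↔ p ≤ c • q := by
  refine ⟨fun h0 => le_of_forall_isClosed_le fun F hF => ?_, fun h => ?_⟩
  · have := q.smul_finite hc
    exact measure_le_of_forall_le_measure_thickening hF fun δ hδ =>
      measure_le_mul_measure_thickening_of_iInf_eq_zero h0 hF.measurableSet hδ
  · exact nonpos_iff_eq_zero.mp <|
      (iInf₂_le _ (map_diag_mem_relaxedCouplings h)).trans_eq (lintegral_edist_map_diag p)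

end MeasureTheory.Measure

theorem relaxedWasserstein_nonneg_and_eq_zero_iff_general
    {Z : Type*} [MetricSpace Z] [MeasurableSpace Z] [BorelSpace Z]
    (p q : Measure Z) [IsProbabilityMeasure p] [IsProbabilityMeasure q]
    (β : ℝ) :
    (0 ≤ ⨅ γ ∈ {γ : Measure (Z × Z) |
          γ.map Prod.fst = p ∧ γ.map Prod.snd ≤ ENNReal.ofReal (1 + β) • q},
        ∫⁻ w, edist w.1 w.2 ∂γ) ∧
    ((⨅ γ ∈ {γ : Measure (Z × Z) |
          γ.map Prod.fst = p ∧ γ.map Prod.snd ≤ ENNReal.ofReal (1 + β) • q},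
        ∫⁻ w, edist w.1 w.2 ∂γ) = 0 ↔
      p ≤ ENNReal.ofReal (1 + β) • q) ∧
    (p ≤ ENNReal.ofReal (1 + β) • q →
      (p.map (fun z => (z, z))).map Prod.fst = p ∧
      (p.map (fun z => (z, z))).map Prod.snd ≤ ENNReal.ofReal (1 + β) • q ∧
      (∫⁻ w, edist w.1 w.2 ∂(p.map (fun z => (z, z)))) = 0) :=
  ⟨zero_le, Measure.iInf_lintegral_edist_eq_zero_iff ENNReal.ofReal_ne_top, fun h =>
    ⟨(Measure.map_diag_mem_relaxedCouplings h).1, (Measure.map_diag_mem_relaxedCouplings h).2,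
      Measure.lintegral_edist_map_diag p⟩⟩

/-- **β-admissibility of the relaxed Wasserstein distance.** For Borel
probability measures `p, q` on a metric space `Z` with finite first moments, the relaxed
Wasserstein distance
`W_β(p,q) = inf { ∫ d(z₁,z₂) dγ : γ has first marginal p and second marginal ≤ (1+β)·q }`
is nonnegative, and `W_β(p,q) = 0` iff `p ≤ (1+β)·q` as measures. In particular, if
`p ≤ (1+β)·q`, the diagonal coupling `γ = p.map (z ↦ (z,z))` lies in `Π_β(p,q)` and has
zero transport cost. -/
theorem relaxedWasserstein_nonneg_and_eq_zero_iff
    {Z : Type*} [MetricSpace Z] [MeasurableSpace Z] [BorelSpace Z]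
    (p q : Measure Z) [IsProbabilityMeasure p] [IsProbabilityMeasure q]
    (β : ℝ) (hβ : 0 ≤ β)
    (hmom : ∃ z0 : Z, (∫⁻ z, edist z z0 ∂p) ≠ ⊤ ∧ (∫⁻ z, edist z z0 ∂q) ≠ ⊤) :
    (0 ≤ ⨅ γ ∈ {γ : Measure (Z × Z) |
          γ.map Prod.fst = p ∧ γ.map Prod.snd ≤ ENNReal.ofReal (1 + β) • q},
        ∫⁻ w, edist w.1 w.2 ∂γ) ∧
    ((⨅ γ ∈ {γ : Measure (Z × Z) |
          γ.map Prod.fst = p ∧ γ.map Prod.snd ≤ ENNReal.ofReal (1 + β) • q},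
        ∫⁻ w, edist w.1 w.2 ∂γ) = 0 ↔
      p ≤ ENNReal.ofReal (1 + β) • q) ∧
    (p ≤ ENNReal.ofReal (1 + β) • q →
      (p.map (fun z => (z, z))).map Prod.fst = p ∧
      (p.map (fun z => (z, z))).map Prod.snd ≤ ENNReal.ofReal (1 + β) • q ∧
      (∫⁻ w, edist w.1 w.2 ∂(p.map (fun z => (z, z)))) = 0) :=
  relaxedWasserstein_nonneg_and_eq_zero_iff_general p q β
end

section
/- (Characterization of the β-reweighting family.) Fix a probability measure q on Z and β ≥ 0. Then the set of reweighted distributions {q_w : w ∈ W_{β,q}} equals exactly the set of probability measures p on Z that are absolutely continuous with respect to q with dp/dq(z) ≤ 1+β for q-almost every z. Consequently, for any distance D between probability measures with D(p, p') = 0 iff p = p', the relaxed distance D_β(p, q) = min_{w ∈ W_{β,q}} D(p, q_w) satisfies D_β(p, q) = 0 if and only if dp/dq ≤ 1+β q-almost everywhere. -/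
open MeasureTheory
open scoped ENNReal

/-!
A weight `w` with `∫ w dq = 1/c` has `∫⁻ w dq = c⁻¹`, so `q_w = c • (w dq)` has
density `c w ≤ c`.
Conversely, if `dp/dq ≤ c` then `w := (dp/dq) / c` takes values in `[0, 1]` (after truncating
on a `q`-null set), has integral `p(Z) / c = 1/c`, and `q_w = c • (w dq) = p`.
-/

section Reweight

variable {Z : Type*} [MeasurableSpace Z]

namespace MeasureTheory.Measure

/-- The reweighted measure `q_w`. -/
noncomputable def reweight (q : Measure Z) (w : Z → ℝ) : Measure Z :=
  (∫⁻ z, ENNReal.ofReal (w z) ∂q)⁻¹ • q.withDensity (fun z => ENNReal.ofReal (w z))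

variable {q : Measure Z}

lemma isProbabilityMeasure_inv_lintegral_smul_withDensity {g : Z → ℝ≥0∞}
    (h0 : ∫⁻ z, g z ∂q ≠ 0) (htop : ∫⁻ z, g z ∂q ≠ ∞) :
    IsProbabilityMeasure ((∫⁻ z, g z ∂q)⁻¹ • q.withDensity g) := by
  constructor
  rw [smul_apply, withDensity_apply _ MeasurableSet.univ, setLIntegral_univ, smul_eq_mul,
    ENNReal.inv_mul_cancel h0 htop]

lemma rnDeriv_smul_withDensity_le [SigmaFinite q] {g : Z → ℝ≥0∞} (hg : Measurable g)
    (hg1 : ∀ z, g z ≤ 1) (a : ℝ≥0∞) :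
    ∀ᵐ z ∂q, (a • q.withDensity g).rnDeriv q z ≤ a := by
  rw [← withDensity_smul a hg]
  filter_upwards [rnDeriv_withDensity q (hg.const_smul a)] with z hz
  exact hz ▸ mul_le_of_le_one_right' (hg1 z)

lemma smul_withDensity_inv_smul_rnDeriv {p : Measure Z} [p.HaveLebesgueDecomposition q]
    (hpq : p ≪ q) {a : ℝ≥0∞} (ha0 : a ≠ 0) (hatop : a ≠ ∞) :
    a • q.withDensity (a⁻¹ • p.rnDeriv q) = p := by
  rw [withDensity_smul' _ _ (ENNReal.inv_ne_top.mpr ha0), withDensity_rnDeriv_eq p q hpq,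
    smul_smul, ENNReal.mul_inv_cancel ha0 hatop, one_smul]

end MeasureTheory.Measure

open MeasureTheory.Measure

variable {q : Measure Z}

lemma integrable_of_forall_mem_Icc [IsFiniteMeasure q] {w : Z → ℝ} (hw : Measurable w)
    (hw01 : ∀ z, w z ∈ Set.Icc (0 : ℝ) 1) : Integrable w q :=
  Integrable.of_bound hw.aestronglyMeasurable 1 <| Filter.Eventually.of_forall fun z => by
    rw [Real.norm_eq_abs, abs_of_nonneg (hw01 z).1]
    exact (hw01 z).2

lemma lintegral_ofReal_eq_inv_of_integral_eq {w : Z → ℝ} (hwi : Integrable w q)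
    (hw0 : 0 ≤ᵐ[q] w) {c : ℝ} (hc : 0 < c) (hint : ∫ z, w z ∂q = 1 / c) :
    ∫⁻ z, ENNReal.ofReal (w z) ∂q = (ENNReal.ofReal c)⁻¹ := by
  rw [← ofReal_integral_eq_lintegral_ofReal hwi hw0, hint, one_div, ENNReal.ofReal_inv_of_pos hc]

section Characterization

variable [IsFiniteMeasure q] {c : ℝ}

lemma isProbabilityMeasure_reweight_and_rnDeriv_le (hc : 0 < c) {w : Z → ℝ} (hw : Measurable w)
    (hw01 : ∀ z, w z ∈ Set.Icc (0 : ℝ) 1) (hint : ∫ z, w z ∂q = 1 / c) :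
    IsProbabilityMeasure (q.reweight w) ∧ q.reweight w ≪ q ∧
      ∀ᵐ z ∂q, (q.reweight w).rnDeriv q z ≤ ENNReal.ofReal c := by
  have hlint := lintegral_ofReal_eq_inv_of_integral_eq (integrable_of_forall_mem_Icc hw hw01)
    (Filter.Eventually.of_forall fun z => (hw01 z).1) hc hint
  refine ⟨?_, (withDensity_absolutelyContinuous q _).smul_left _, ?_⟩
  · refine isProbabilityMeasure_inv_lintegral_smul_withDensity ?_ ?_ <;>
      simp [hlint, hc]
  · have hbound := rnDeriv_smul_withDensity_le (q := q) hw.ennreal_ofReal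
      (fun z => ENNReal.ofReal_le_one.mpr (hw01 z).2) (∫⁻ z, ENNReal.ofReal (w z) ∂q)⁻¹
    rw [hlint, inv_inv] at hbound
    rwa [reweight, hlint, inv_inv]

lemma exists_reweight_eq_of_rnDeriv_le (hc : 0 < c) {p : Measure Z} [IsProbabilityMeasure p]
    (hpq : p ≪ q) (hbd : ∀ᵐ z ∂q, p.rnDeriv q z ≤ ENNReal.ofReal c) :
    ∃ w : Z → ℝ, Measurable w ∧ (∀ z, w z ∈ Set.Icc (0 : ℝ) 1) ∧
      (∫ z, w z ∂q) = 1 / c ∧ p = q.reweight w := by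
  set w : Z → ℝ := fun z => min ((p.rnDeriv q z).toReal / c) 1
  have hw : Measurable w :=
    ((measurable_rnDeriv p q).ennreal_toReal.div_const c).min measurable_const
  have hw01 : ∀ z, w z ∈ Set.Icc (0 : ℝ) 1 := fun z =>
    ⟨le_min (div_nonneg ENNReal.toReal_nonneg hc.le) zero_le_one, min_le_right _ _⟩
  have hw_ae : ∀ᵐ z ∂q, w z = (p.rnDeriv q z).toReal / c := by
    filter_upwards [hbd] with z hz
    exact min_eq_left <| (div_le_one hc).mpr (ENNReal.toReal_le_of_le_ofReal hc.le hz)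
  have hint : ∫ z, w z ∂q = 1 / c := by
    rw [integral_congr_ae hw_ae, integral_div, integral_toReal_rnDeriv hpq, probReal_univ]
  have hdensity :
      (fun z => ENNReal.ofReal (w z)) =ᵐ[q] (ENNReal.ofReal c)⁻¹ • p.rnDeriv q := by
    filter_upwards [hw_ae, rnDeriv_lt_top p q] with z hz hlt
    rw [hz, ENNReal.ofReal_div_of_pos hc, ENNReal.ofReal_toReal hlt.ne,
      ENNReal.div_eq_inv_mul]
    rfl
  refine ⟨w, hw, hw01, hint, ?_⟩
  rw [reweight, lintegral_ofReal_eq_inv_of_integral_eq (integrable_of_forall_mem_Icc hw hw01)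
    (Filter.Eventually.of_forall fun z => (hw01 z).1) hc hint, inv_inv,
    withDensity_congr_ae hdensity,
    smul_withDensity_inv_smul_rnDeriv hpq (by simpa using hc) ENNReal.ofReal_ne_top]

lemma exists_reweight_eq_iff (hc : 0 < c) (p : Measure Z) :
    (∃ w : Z → ℝ, Measurable w ∧ (∀ z, w z ∈ Set.Icc (0 : ℝ) 1) ∧
      (∫ z, w z ∂q) = 1 / c ∧ p = q.reweight w) ↔
    IsProbabilityMeasure p ∧ p ≪ q ∧ ∀ᵐ z ∂q, p.rnDeriv q z ≤ ENNReal.ofReal c := by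
  constructor
  · rintro ⟨w, hw, hw01, hint, rfl⟩
    exact isProbabilityMeasure_reweight_and_rnDeriv_le hc hw hw01 hint
  · rintro ⟨hp, hpq, hbd⟩
    exact exists_reweight_eq_of_rnDeriv_le hc hpq hbd

end Characterization

end Reweight

/-- **characterization of the β-reweighting family.** For a probability
measure `q` on `Z` and `β ≥ 0`, the family of reweighted distributions
`q_w = (∫ w dq)⁻¹ · (w dq)` over `w ∈ W_{β,q}` (i.e. measurable `w : Z → [0,1]` with
`∫ w dq = 1/(1+β)`) equals exactly the set of probability measures `p ≪ q` with
`dp/dq ≤ 1+β` `q`-a.e.  Consequently, for any distance `D` with `D(a,b) = 0 ↔ a = b`,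
the relaxed distance `D_β(p,q) = min_{w ∈ W_{β,q}} D(p, q_w)` vanishes (i.e. the minimum
`0` is attained by some `w`) iff `p ≪ q` with `dp/dq ≤ 1+β` `q`-a.e. -/
theorem reweighting_family_characterization
    {Z : Type*} [MeasurableSpace Z]
    (q : Measure Z) [IsProbabilityMeasure q] (β : ℝ) (hβ : 0 ≤ β) :
    ({p : Measure Z |
        ∃ w : Z → ℝ, Measurable w ∧ (∀ z, w z ∈ Set.Icc (0 : ℝ) 1) ∧
          (∫ z, w z ∂q) = 1 / (1 + β) ∧
          p = (∫⁻ z, ENNReal.ofReal (w z) ∂q)⁻¹ •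
                q.withDensity (fun z => ENNReal.ofReal (w z))} =
      {p : Measure Z | IsProbabilityMeasure p ∧ p ≪ q ∧
        ∀ᵐ z ∂q, p.rnDeriv q z ≤ ENNReal.ofReal (1 + β)}) ∧
    (∀ D : Measure Z → Measure Z → ℝ, (∀ a b, D a b = 0 ↔ a = b) →
      ∀ p : Measure Z, IsProbabilityMeasure p →
        ((∃ w : Z → ℝ, Measurable w ∧ (∀ z, w z ∈ Set.Icc (0 : ℝ) 1) ∧
            (∫ z, w z ∂q) = 1 / (1 + β) ∧
            D p ((∫⁻ z, ENNReal.ofReal (w z) ∂q)⁻¹ •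
                  q.withDensity (fun z => ENNReal.ofReal (w z))) = 0) ↔
          (p ≪ q ∧ ∀ᵐ z ∂q, p.rnDeriv q z ≤ ENNReal.ofReal (1 + β)))) := by
  have hc : (0 : ℝ) < 1 + β := by linarith
  refine ⟨Set.ext (exists_reweight_eq_iff hc), fun D hD p hp => ?_⟩
  simp only [hD]
  exact (exists_reweight_eq_iff hc p).trans ⟨fun h => h.2, fun h => ⟨hp, h⟩⟩
end
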